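/- arXiv:2001.09091 — 5 statements merged into one kernel-verified Lean document; each statement's English description precedes it below -/
import Mathlib

section
/- Every subgroup H of G whose index d satisfies 2 ≤ d ≤ 20 has normal closure equal to the whole group G, i.e. the smallest normal subgroup of G containing H is G itself. -/
namespace Stmt1Aux

open Equiv Subgroup

/-! ### Solvability of `S₄` -/

def Vmem (g : Perm (Fin 4)) : Prop :=
  g = 1 ∨ g = Equiv.swap 0 1 * Equiv.swap 2 3 ∨ g = Equiv.swap 0 2 * Equiv.swap 1 3
    ∨ g = Equiv.swap 0 3 * Equiv.swap 1 2

instance : DecidablePred Vmem := fun g =>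
  inferInstanceAs (Decidable (_ ∨ _))

theorem Vmul : ∀ a b : Perm (Fin 4), Vmem a → Vmem b → Vmem (a * b) := by decide
theorem Vinv : ∀ a : Perm (Fin 4), Vmem a → Vmem a⁻¹ := by decide

def V : Subgroup (Perm (Fin 4)) where
  carrier := setOf Vmem
  mul_mem' := Vmul _ _
  one_mem' := Or.inl rfl
  inv_mem' := Vinv _

def A4 : Subgroup (Perm (Fin 4)) := Equiv.Perm.sign.ker

instance : DecidablePred (· ∈ A4) := fun g =>
  decidable_of_iff (Equiv.Perm.sign g = 1) MonoidHom.mem_ker.symm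

theorem step1 : ⁅(⊤ : Subgroup (Perm (Fin 4))), ⊤⁆ ≤ A4 := by
  rw [commutator_le]
  intro g _ h _
  rw [A4, MonoidHom.mem_ker]
  simp only [commutatorElement_def, map_mul, map_inv]
  rw [mul_comm (Perm.sign g) (Perm.sign h)]
  simp [mul_assoc]

set_option maxRecDepth 100000 in
open commutatorElement in
theorem step2 : ∀ g h : Perm (Fin 4), g ∈ A4 → h ∈ A4 → Vmem ⁅g, h⁆ := by decide

set_option maxRecDepth 100000 in
open commutatorElement in
theorem step3 : ∀ g h : Perm (Fin 4), Vmem g → Vmem h → ⁅g, h⁆ = 1 := by decide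

theorem s4_solvable : Group.IsSolvable (Perm (Fin 4)) := by
  refine ⟨3, le_bot_iff.mp ?_⟩
  have h2 : ⁅A4, A4⁆ ≤ V := by
    rw [commutator_le]; exact fun g hg h hh => step2 g h hg hh
  have h3 : ⁅V, V⁆ ≤ ⊥ := by
    rw [commutator_le]; intro g hg h hh; rw [mem_bot]; exact step3 g h hg hh
  calc derivedSeries (Perm (Fin 4)) 3 = ⁅⁅⁅⊤,⊤⁆,⁅⊤,⊤⁆⁆,⁅⁅⊤,⊤⁆,⁅⊤,⊤⁆⁆⁆ := by
        simp [derivedSeries_succ, derivedSeries_zero, _root_.commutator_def]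
    _ ≤ ⊥ := le_trans (commutator_mono (commutator_mono step1 step1) (commutator_mono step1 step1))
        (le_trans (commutator_mono h2 h2) h3)

/-! ### Perfect groups -/

theorem perfect_solvable {Q : Type*} [Group Q] (h : _root_.commutator Q = ⊤)
    [hs : Group.IsSolvable Q] : Subsingleton Q := by
  obtain ⟨n, hn⟩ := hs
  have key : ∀ m : ℕ, derivedSeries Q m = ⊤ := by
    intro m
    induction m with
    | zero => rfl
    | succ m ih => rw [derivedSeries_succ, ih, ← _root_.commutator_def, h]
  rw [key n] at hn
  exact Subsingleton.intro fun x y => by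
    have hx : x ∈ (⊥ : Subgroup Q) := hn ▸ Subgroup.mem_top x
    have hy : y ∈ (⊥ : Subgroup Q) := hn ▸ Subgroup.mem_top y
    rw [Subgroup.mem_bot.mp hx, Subgroup.mem_bot.mp hy]

theorem perm_solvable_of_card_le {α : Type*} [Fintype α] (h : Fintype.card α ≤ 4) :
    Group.IsSolvable (Equiv.Perm α) := by
  have hne : Nonempty (α ↪ Fin 4) := Function.Embedding.nonempty_iff_card_le.mpr (by simpa using h)
  have : Group.IsSolvable (Perm (Fin 4)) := s4_solvable
  exact solvable_of_solvable_injective (Equiv.Perm.viaEmbeddingHom_injective hne.some)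

theorem perfect_of_surjective {Q Q' : Type*} [Group Q] [Group Q'] (f : Q →* Q')
    (hf : Function.Surjective f) (h : _root_.commutator Q = ⊤) : _root_.commutator Q' = ⊤ := by
  have htop : Subgroup.map f ⊤ = ⊤ := by
    rw [← MonoidHom.range_eq_map, f.range_eq_top_of_surjective hf]
  rw [_root_.commutator_def, ← htop, ← Subgroup.map_commutator, ← _root_.commutator_def, h, htop]

theorem pgroup_perfect {Q : Type*} [Group Q] [Finite Q] {p : ℕ} [Fact p.Prime]
    (hp : IsPGroup p Q) (h : _root_.commutator Q = ⊤) : Subsingleton Q := by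
  have := hp.isNilpotent
  have : Group.IsSolvable Q := IsNilpotent.to_isSolvable
  exact perfect_solvable h

theorem lemC {Q : Type*} [Group Q] [Finite Q] {q : ℕ} [Fact q.Prime]
    (hperf : _root_.commutator Q = ⊤) (P : Sylow q Q) (hidx : (P : Subgroup Q).index ≤ 4) :
    Subsingleton Q := by
  classical
  have hfi : (P : Subgroup Q).FiniteIndex := Subgroup.finiteIndex_of_finite_quotient
  have hScard : Nat.card (Sylow q Q) ≤ 4 := by
    have h1 : Nat.card (Sylow q Q) ∣ (P : Subgroup Q).index := Sylow.card_dvd_index P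
    exact le_trans (Nat.le_of_dvd (Nat.pos_of_ne_zero hfi.index_ne_zero) h1) hidx
  have : Fintype (Sylow q Q) := Fintype.ofFinite _
  have hsolv : Group.IsSolvable (Equiv.Perm (Sylow q Q)) :=
    perm_solvable_of_card_le (by rwa [← Nat.card_eq_fintype_card])
  set φ := MulAction.toPermHom Q (Sylow q Q) with hφ
  have hker : φ.ker = ⊤ := by
    have hsolv2 : Group.IsSolvable (Q ⧸ φ.ker) :=
      solvable_of_solvable_injective (QuotientGroup.kerLift_injective φ)
    have hperf2 : _root_.commutator (Q ⧸ φ.ker) = ⊤ :=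
      perfect_of_surjective _ (QuotientGroup.mk'_surjective _) hperf
    have : Subsingleton (Q ⧸ φ.ker) := perfect_solvable hperf2
    rw [Subgroup.eq_top_iff']
    intro g
    exact (QuotientGroup.eq_one_iff g).mp (Subsingleton.elim _ _)
  have hnorm : (P : Subgroup Q).Normal := by
    rw [← Subgroup.normalizer_eq_top_iff, Subgroup.eq_top_iff']
    intro g
    refine Sylow.smul_eq_iff_mem_normalizer.mp ?_
    have h1 : φ g = 1 := by rw [← MonoidHom.mem_ker, hker]; trivial
    have h2 := congrArg (fun e : Equiv.Perm (Sylow q Q) => e P) h1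
    simpa [hφ, MulAction.toPermHom_apply] using h2
  have hQP : Subsingleton (Q ⧸ (P : Subgroup Q)) := by
    have : Fintype (Q ⧸ (P : Subgroup Q)) := Fintype.ofFinite _
    have hcard : Fintype.card (Q ⧸ (P : Subgroup Q)) ≤ 4 := by
      rw [← Nat.card_eq_fintype_card, ← Subgroup.index_eq_card]; exact hidx
    have hsolv3 : Group.IsSolvable (Equiv.Perm (Q ⧸ (P : Subgroup Q))) := perm_solvable_of_card_le hcard
    have hinj : Function.Injective
        (MulAction.toPermHom (Q ⧸ (P : Subgroup Q)) (Q ⧸ (P : Subgroup Q))) :=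
      fun x y hxy => by
        have h3 := congrArg (fun e : Equiv.Perm (Q ⧸ (P : Subgroup Q)) => e 1) hxy
        simpa [MulAction.toPermHom_apply] using h3
    have : Group.IsSolvable (Q ⧸ (P : Subgroup Q)) := solvable_of_solvable_injective hinj
    exact perfect_solvable (perfect_of_surjective _ (QuotientGroup.mk'_surjective _) hperf)
  have hPtop : (P : Subgroup Q) = ⊤ := by
    rw [Subgroup.eq_top_iff']
    intro g
    exact (QuotientGroup.eq_one_iff g).mp (Subsingleton.elim _ _)
  have hpg : IsPGroup q Q := by
    have h4 := P.2
    rw [hPtop] at h4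
    exact h4.of_equiv Subgroup.topEquiv
  exact pgroup_perfect hpg hperf

theorem lemB {Q : Type*} [Group Q] [Finite Q] (hcard : Nat.card Q ≤ 20)
    (hperf : _root_.commutator Q = ⊤) : Subsingleton Q := by
  classical
  have hpp : ∀ p k : ℕ, p.Prime → Nat.card Q = p ^ k → Subsingleton Q := fun p k hp hc => by
    have : Fact p.Prime := ⟨hp⟩
    exact pgroup_perfect (IsPGroup.of_card hc) hperf
  have hcomp : ∀ q N : ℕ, q.Prime → Nat.card Q = N → (∀ m : ℕ, m ∣ N → ¬ q ∣ m → m ≤ 4) →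
      Subsingleton Q := fun q N hq hcn hb => by
    rw [← hcn] at hb
    have : Fact q.Prime := ⟨hq⟩
    obtain ⟨P⟩ : Nonempty (Sylow q Q) := inferInstance
    have hfi : (P : Subgroup Q).FiniteIndex := Subgroup.finiteIndex_of_finite_quotient
    exact lemC hperf P (hb _ (Subgroup.index_dvd_card _) (Sylow.not_dvd_index P))
  have hne : Nonempty Q := ⟨1⟩
  have h1 : 1 ≤ Nat.card Q := Nat.card_pos
  set n := Nat.card Q with hn
  interval_cases n
  · exact ⟨fun x y => by
      have := Nat.card_eq_one_iff_unique.mp hn.symm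
      exact this.1.elim x y⟩
  · exact hpp 2 1 (by norm_num) (by omega)
  · exact hpp 3 1 (by norm_num) (by omega)
  · exact hpp 2 2 (by norm_num) (by omega)
  · exact hpp 5 1 (by norm_num) (by omega)
  · exact hcomp 3 _ (by norm_num) rfl (fun m hm hd => by
      have := Nat.le_of_dvd (by norm_num) hm; interval_cases m <;> omega)
  · exact hpp 7 1 (by norm_num) (by omega)
  · exact hpp 2 3 (by norm_num) (by omega)
  · exact hpp 3 2 (by norm_num) (by omega)
  · exact hcomp 5 _ (by norm_num) rfl (fun m hm hd => by
      have := Nat.le_of_dvd (by norm_num) hm; interval_cases m <;> omega)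
  · exact hpp 11 1 (by norm_num) (by omega)
  · exact hcomp 3 _ (by norm_num) rfl (fun m hm hd => by
      have := Nat.le_of_dvd (by norm_num) hm; interval_cases m <;> omega)
  · exact hpp 13 1 (by norm_num) (by omega)
  · exact hcomp 7 _ (by norm_num) rfl (fun m hm hd => by
      have := Nat.le_of_dvd (by norm_num) hm; interval_cases m <;> omega)
  · exact hcomp 5 _ (by norm_num) rfl (fun m hm hd => by
      have := Nat.le_of_dvd (by norm_num) hm; interval_cases m <;> omega)
  · exact hpp 2 4 (by norm_num) (by omega)
  · exact hpp 17 1 (by norm_num) (by omega)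
  · exact hcomp 3 _ (by norm_num) rfl (fun m hm hd => by
      have := Nat.le_of_dvd (by norm_num) hm; interval_cases m <;> omega)
  · exact hpp 19 1 (by norm_num) (by omega)
  · exact hcomp 5 _ (by norm_num) rfl (fun m hm hd => by
      have := Nat.le_of_dvd (by norm_num) hm; interval_cases m <;> omega)

theorem abelian_aux {A : Type*} [CommGroup A] (x y : A)
    (h1 : x * y⁻¹ * x * y ^ 2 * x * y⁻¹ * x * y ^ 3 = 1)
    (h2 : x ^ 4 * y * x⁻¹ * y = 1) : x = 1 ∧ y = 1 := by
  have h1' : x ^ 4 * y ^ 3 = 1 := by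
    rw [← h1]; simp [pow_succ, mul_comm, mul_left_comm, mul_assoc]
  have h2' : x ^ 3 * y ^ 2 = 1 := by
    rw [← h2]; simp [pow_succ, mul_comm, mul_left_comm, mul_assoc]
  have h3 : x * y = 1 := by
    have e : x ^ 4 * y ^ 3 = (x ^ 3 * y ^ 2) * (x * y) := by
      simp [pow_succ, mul_comm, mul_left_comm, mul_assoc]
    rw [e, h2', one_mul] at h1'
    exact h1'
  have hx1 : x = 1 := by
    have e : x ^ 3 * y ^ 2 = (x * y) * ((x * y) * x) := by
      simp [pow_succ, mul_comm, mul_left_comm, mul_assoc]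
    rw [e, h3, one_mul, one_mul] at h2'
    exact h2'
  refine ⟨hx1, ?_⟩
  rw [hx1, one_mul] at h3
  exact h3

end Stmt1Aux

namespace Stmt1

def a : FreeGroup (Fin 2) := FreeGroup.of 0
def b : FreeGroup (Fin 2) := FreeGroup.of 1

/-- The two relators of `π₁(∂W) = π₁(Σ(2,5,7)) = ⟨a,b | aBab²aBab³, a⁴bAb⟩`. -/
def rels : Set (FreeGroup (Fin 2)) :=
  { a * b⁻¹ * a * b^2 * a * b⁻¹ * a * b^3, a^4 * b * a⁻¹ * b }

/-- The fundamental group `G = π₁(∂W)` of the boundary of the Akbulut cork. -/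
abbrev G := PresentedGroup rels

theorem G_perfect : _root_.commutator G = ⊤ := by
  classical
  set f : FreeGroup (Fin 2) →* Abelianization G :=
    Abelianization.of.comp (QuotientGroup.mk' (Subgroup.normalClosure rels)) with hf
  have hrel : ∀ r ∈ rels, f r = 1 := by
    intro r hr
    have h : (QuotientGroup.mk' (Subgroup.normalClosure rels)) r = 1 := by
      rw [QuotientGroup.mk'_apply, QuotientGroup.eq_one_iff]
      exact Subgroup.subset_normalClosure hr
    rw [hf]
    exact (congrArg (Abelianization.of : G →* Abelianization G) h).trans (map_one _)
  have h1 : f a * (f b)⁻¹ * f a * (f b) ^ 2 * f a * (f b)⁻¹ * f a * (f b) ^ 3 = 1 := by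
    have := hrel (a * b⁻¹ * a * b^2 * a * b⁻¹ * a * b^3) (Or.inl rfl)
    simpa [map_mul, map_inv, map_pow] using this
  have h2 : (f a) ^ 4 * f b * (f a)⁻¹ * f b = 1 := by
    have := hrel (a^4 * b * a⁻¹ * b) (Or.inr rfl)
    simpa [map_mul, map_inv, map_pow] using this
  obtain ⟨hx1, hy1⟩ := Stmt1Aux.abelian_aux (f a) (f b) h1 h2
  rw [eq_top_iff, ← PresentedGroup.closure_range_of rels, Subgroup.closure_le]
  rintro g ⟨i, rfl⟩
  have hofi : Abelianization.of (PresentedGroup.of (rels := rels) i) = 1 := by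
    fin_cases i
    · exact hx1
    · exact hy1
  exact (QuotientGroup.eq_one_iff _).mp hofi

theorem normalClosure_eq_top_of_index_between_two_and_twenty
    (H : Subgroup G) (h2 : 2 ≤ H.index) (h20 : H.index ≤ 20) :
    Subgroup.normalClosure (H : Set G) = ⊤ := by
  set N := Subgroup.normalClosure (H : Set G) with hN
  have hHN : H ≤ N := fun g hg => Subgroup.subset_normalClosure hg
  have hnormal : N.Normal := Subgroup.normalClosure_normal
  have hdvd : N.index ∣ H.index := Subgroup.index_dvd_of_le hHN
  have hH0 : H.index ≠ 0 := by omega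
  have hN0 : N.index ≠ 0 := fun h => hH0 (Nat.eq_zero_of_zero_dvd (h ▸ hdvd))
  have hNle : N.index ≤ 20 := le_trans (Nat.le_of_dvd (by omega) hdvd) h20
  have hcardQ : Nat.card (G ⧸ N) = N.index := (Subgroup.index_eq_card N).symm
  have hfin : Finite (G ⧸ N) := Nat.finite_of_card_ne_zero (by rw [hcardQ]; exact hN0)
  have hperfQ : _root_.commutator (G ⧸ N) = ⊤ :=
    Stmt1Aux.perfect_of_surjective (QuotientGroup.mk' N)
      (QuotientGroup.mk'_surjective N) G_perfect
  have hsub : Subsingleton (G ⧸ N) := Stmt1Aux.lemB (by rw [hcardQ]; exact hNle) hperfQ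
  have hone : N.index = 1 := by
    rw [← hcardQ]
    exact Nat.card_eq_one_iff_unique.mpr ⟨⟨Subsingleton.elim⟩, ⟨1⟩⟩
  exact Subgroup.index_eq_one.mp hone

end Stmt1
end

section
/- The subgroup P of the symmetric group on 28 letters generated by the two permutations g₁ = (2,4,8,6,3)(5,10,15,13,9)(11,12,18,25,17)(14,20,19,24,21)(16,22,26,28,23) and g₂ = (1,2,5,11,6,7,3)(4,8,12,19,22,14,9)(10,16,24,27,21,26,17)(13,20,18,25,28,23,15) is isomorphic (as a group) to the alternating group A₈ on eight letters. -/
set_option maxRecDepth 40000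

namespace Stmt5

/-- The permutation `g₁ = (2,4,8,6,3)(5,10,15,13,9)(11,12,18,25,17)(14,20,19,24,21)(16,22,26,28,23)`
on 28 letters (the letter `28` is represented by `(28 : Fin 28) = 0`). -/
def g₁ : Equiv.Perm (Fin 28) :=
  c[2, 4, 8, 6, 3] * c[5, 10, 15, 13, 9] * c[11, 12, 18, 25, 17] *
    c[14, 20, 19, 24, 21] * c[16, 22, 26, 28, 23]

/-- The permutation `g₂ = (1,2,5,11,6,7,3)(4,8,12,19,22,14,9)(10,16,24,27,21,26,17)(13,20,18,25,28,23,15)`. -/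
def g₂ : Equiv.Perm (Fin 28) :=
  c[1, 2, 5, 11, 6, 7, 3] * c[4, 8, 12, 19, 22, 14, 9] *
    c[10, 16, 24, 27, 21, 26, 17] * c[13, 20, 18, 25, 28, 23, 15]

/-- The 28-letter permutation group `P = ⟨g₁, g₂⟩`. -/
def P : Subgroup (Equiv.Perm (Fin 28)) := Subgroup.closure {g₁, g₂}

open Equiv Equiv.Perm

/-- preimage of `g₁` under the action on pairs. -/
def a : Equiv.Perm (Fin 8) := c[1, 3, 4, 5, 6]

/-- preimage of `g₂` under the action on pairs. -/
def b : Equiv.Perm (Fin 8) := c[0, 3, 2, 4, 6, 7, 1]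

def fstL : List (Fin 8) := [0, 0, 3, 1, 4, 2, 1, 0, 5, 2, 1, 4, 5, 2, 3, 2, 0, 3, 6, 1, 4, 1, 0, 0, 3, 1, 0, 2]
def sndL : List (Fin 8) := [1, 2, 4, 3, 5, 6, 6, 7, 6, 5, 2, 7, 7, 4, 5, 3, 4, 7, 7, 5, 6, 4, 5, 3, 6, 7, 6, 7]

/-- the 2-subset of `Fin 8` attached to each of the 28 letters. -/
def toPair (i : Fin 28) : Sym2 (Fin 8) := s(fstL.getD i.val 0, sndL.getD i.val 0)

def pidxL : List (Fin 28) := [0, 0, 1, 23, 16, 22, 26, 7, 0, 0, 10, 3, 21, 19, 6, 25, 1, 10, 0, 15, 13, 9, 5, 27, 23, 3, 15, 0, 2, 14, 24, 17, 16, 21, 13, 2, 0, 4, 20, 11, 22, 19, 9, 14, 4, 0, 8, 12, 26, 6, 5, 24, 20, 8, 0, 18, 7, 25, 27, 17, 11, 12, 18, 0]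

/-- the letter attached to a pair. -/
def pairIndex (i j : Fin 8) : Fin 28 := pidxL.getD (i.val * 8 + j.val) 0

lemma pairIndex_comm : ∀ i j : Fin 8, pairIndex i j = pairIndex j i := by decide

lemma toPair_not_isDiag : ∀ i : Fin 28, ¬ (toPair i).IsDiag := by decide

lemma toPair_pairIndex : ∀ x y : Fin 8, x ≠ y → toPair (pairIndex x y) = s(x, y) := by decide

lemma pairIndex_toPair : ∀ i : Fin 28, Sym2.lift ⟨pairIndex, pairIndex_comm⟩ (toPair i) = i := by
  decide

/-- the 28 letters are in bijection with the off-diagonal pairs. -/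
def e : Fin 28 ≃ {p : Sym2 (Fin 8) // ¬ p.IsDiag} where
  toFun i := ⟨toPair i, toPair_not_isDiag i⟩
  invFun p := Sym2.lift ⟨pairIndex, pairIndex_comm⟩ p.val
  left_inv i := pairIndex_toPair i
  right_inv := by
    rintro ⟨p, hp⟩
    induction p using Sym2.ind with
    | _ x y =>
      have hxy : x ≠ y := fun h => hp (Sym2.mk_isDiag_iff.mpr h)
      exact Subtype.ext (by simpa using toPair_pairIndex x y hxy)

/-- the action of a permutation of `Fin 8` on `Sym2 (Fin 8)`. -/
def sym2P (g : Equiv.Perm (Fin 8)) : Equiv.Perm (Sym2 (Fin 8)) where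
  toFun := Sym2.map g
  invFun := Sym2.map g.symm
  left_inv p := by induction p using Sym2.ind with
    | _ x y => simp [Sym2.map_pair_eq]
  right_inv p := by induction p using Sym2.ind with
    | _ x y => simp [Sym2.map_pair_eq]

lemma sym2P_mul (g h : Equiv.Perm (Fin 8)) : sym2P (g * h) = sym2P g * sym2P h := by
  apply Equiv.ext
  intro p
  induction p using Sym2.ind with
  | _ x y => simp [sym2P, Sym2.map_pair_eq]

/-- the action restricted to off-diagonal pairs. -/
def sSub (g : Equiv.Perm (Fin 8)) : Equiv.Perm {p : Sym2 (Fin 8) // ¬ p.IsDiag} :=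
  (sym2P g).subtypePerm (fun p => not_congr (Sym2.isDiag_map g.injective))

lemma sSub_mul (g h : Equiv.Perm (Fin 8)) : sSub (g * h) = sSub g * sSub h := by
  apply Equiv.ext
  rintro ⟨p, hp⟩
  exact Subtype.ext (Equiv.ext_iff.mp (sym2P_mul g h) p)

/-- The homomorphism from the permutations of 8 points to the permutations of the 28 pairs. -/
def Φ : Equiv.Perm (Fin 8) →* Equiv.Perm (Fin 28) :=
  MonoidHom.mk' (fun g => e.symm.permCongr (sSub g)) (by
    intro g h
    apply Equiv.ext
    intro i
    simp [sSub_mul, Equiv.permCongr_apply, Equiv.Perm.mul_apply])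

lemma Φ_apply (g : Equiv.Perm (Fin 8)) (i : Fin 28) :
    Φ g i = e.symm (sSub g (e i)) := by
  simp [Φ, Equiv.permCongr_apply]

lemma Φ_injective : Function.Injective Φ := by
  rw [injective_iff_map_eq_one]
  intro g hg
  have key : ∀ x y : Fin 8, x ≠ y → Sym2.map g s(x, y) = s(x, y) := by
    intro x y hxy
    have h1 : Φ g (pairIndex x y) = pairIndex x y := by rw [hg]; rfl
    rw [Φ_apply] at h1
    have h2 : sSub g (e (pairIndex x y)) = e (pairIndex x y) := by
      have := congrArg e h1
      rwa [Equiv.apply_symm_apply] at this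
    have h3 : (e (pairIndex x y) : Sym2 (Fin 8)) = s(x, y) := by
      show toPair (pairIndex x y) = s(x, y)
      exact toPair_pairIndex x y hxy
    have h4 := congrArg Subtype.val h2
    simpa [sSub, sym2P, h3] using h4
  have n1 : ∀ u : Fin 8, u ≠ u + 1 := by decide
  have n2 : ∀ u : Fin 8, u ≠ u + 2 := by decide
  have n3 : ∀ u : Fin 8, u + 1 ≠ u + 2 := by decide
  apply Equiv.ext
  intro x
  have k1 := key x (x + 1) (n1 x)
  have k2 := key x (x + 2) (n2 x)
  rw [Sym2.map_pair_eq, Sym2.eq_iff] at k1 k2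
  simp only [Equiv.Perm.one_apply]
  rcases k1 with ⟨h, _⟩ | ⟨h1, _⟩
  · exact h
  rcases k2 with ⟨h, _⟩ | ⟨h2, _⟩
  · exact h
  exact absurd (h1 ▸ h2) (n3 x)

set_option maxHeartbeats 1000000 in
lemma Φ_a : Φ a = g₁ := Equiv.ext (by decide)

set_option maxHeartbeats 1000000 in
lemma Φ_b : Φ b = g₂ := Equiv.ext (by decide)

set_option maxHeartbeats 1000000 in
lemma sign_a : Equiv.Perm.sign a = 1 := by decide

set_option maxHeartbeats 1000000 in
lemma sign_b : Equiv.Perm.sign b = 1 := by decide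

/-- generators: a, a⁻¹, b, b⁻¹ -/
def gen : Fin 4 → Equiv.Perm (Fin 8) := ![a, a⁻¹, b, b⁻¹]

def evalWord (l : List (Fin 4)) : Equiv.Perm (Fin 8) := (l.map gen).prod

/-- the subgroup generated by a and b -/
def H : Subgroup (Equiv.Perm (Fin 8)) := Subgroup.closure {a, b}

lemma gen_mem : ∀ i : Fin 4, gen i ∈ H := by
  have ha : a ∈ H := Subgroup.subset_closure (Set.mem_insert _ _)
  have hb : b ∈ H := Subgroup.subset_closure (Set.mem_insert_of_mem _ rfl)
  intro i
  fin_cases i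
  · exact ha
  · exact inv_mem ha
  · exact hb
  · exact inv_mem hb

lemma evalWord_mem (l : List (Fin 4)) : evalWord l ∈ H := by
  induction l with
  | nil => exact one_mem H
  | cons i t ih =>
    rw [evalWord, List.map_cons, List.prod_cons]
    exact mul_mem (gen_mem i) ih

set_option maxHeartbeats 2000000 in
/-- words expressing every 3-cycle in terms of the generators. -/
def wtab : List (List (Fin 4)) := [[],
  [],
  [],
  [],
  [],
  [],
  [],
  [],
  [],
  [],
  [0, 3, 3, 1, 3, 1, 1, 3, 3, 1, 1, 2, 0],
  [0, 0, 3, 3, 3, 1, 1, 2, 0, 2, 2, 0, 2, 0],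
  [0, 2, 0, 2, 0, 2, 0, 2, 0, 2],
  [3, 1, 1, 3, 1, 3, 3, 1, 3, 3, 1],
  [0, 0, 2, 2, 2, 0, 0, 3, 1, 3, 3, 1, 3],
  [1, 1, 2, 2, 0, 2, 0, 0, 2, 2, 0, 0, 3],
  [],
  [1, 1, 2, 0, 2, 2, 0, 0, 2, 0, 2, 0, 3],
  [],
  [1, 2, 0, 2, 2, 0, 0, 2, 0, 2, 0, 3, 1],
  [2, 0, 2, 2, 0, 0, 2, 0, 2, 2, 0, 0],
  [0, 2, 0, 2, 2, 0, 0, 2, 0, 2, 2, 0],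
  [0, 0, 2, 0, 2, 2, 0, 0, 2, 0, 2, 2],
  [3, 1, 1, 2, 2, 0, 0, 3, 3, 1, 2, 0, 3, 3],
  [],
  [1, 1, 2, 2, 2, 0, 0, 3, 1, 3, 3, 1, 3, 1],
  [0, 0, 3, 3, 1, 3, 1, 1, 3, 3, 1, 1, 2],
  [],
  [1, 1, 3, 3, 3, 1, 1, 2, 0, 2, 2, 0, 2],
  [2, 0, 0, 2, 0, 2, 2, 0, 2, 2, 0],
  [1, 3, 1, 3, 1, 3, 1, 3, 1, 3],
  [1, 2, 2, 0, 2, 0, 0, 2, 2, 0, 0, 3, 1],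
  [],
  [3, 1, 3, 1, 3, 1, 3, 1, 3, 1],
  [1, 1, 3, 3, 1, 3, 1, 1, 3, 3, 1, 3],
  [3, 1, 3, 3, 1, 1, 2, 0, 2, 2, 2, 0, 0],
  [],
  [1, 1, 2, 0, 2, 2, 0, 0, 3, 1, 3, 3, 3],
  [0, 2, 0, 0, 2, 0, 2, 2, 0, 2, 2],
  [2, 2, 0, 2, 0, 0, 2, 2, 0, 2, 0, 0],
  [],
  [0, 0, 2, 0, 2, 2, 0, 2, 2, 0, 2],
  [1, 3, 3, 1, 3, 1, 1, 3, 3, 1, 3, 1],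
  [1, 1, 3, 1, 3, 3, 1, 3, 3, 1, 3],
  [0, 3, 1, 3, 3, 1, 1, 2, 0, 2, 2, 2, 0],
  [],
  [1, 2, 0, 2, 2, 0, 0, 3, 1, 3, 3, 3, 1],
  [0, 2, 2, 0, 2, 0, 0, 2, 2, 0, 2, 0],
  [],
  [2, 0, 2, 2, 0, 0, 3, 1, 3, 3, 3, 1, 1],
  [3, 3, 1, 3, 1, 1, 3, 3, 1, 3, 1, 1],
  [2, 0, 2, 0, 2, 0, 2, 0, 2, 0],
  [1, 3, 1, 1, 3, 1, 3, 3, 1, 3, 3],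
  [0, 0, 3, 1, 3, 3, 1, 1, 2, 0, 2, 2, 2],
  [],
  [0, 0, 2, 2, 0, 2, 0, 0, 2, 2, 0, 2],
  [],
  [0, 3, 1, 3, 3, 1, 1, 3, 1, 3, 1, 2, 0],
  [2, 0, 0, 3, 3, 1, 1, 2, 2, 0, 3, 1, 2, 2],
  [0, 0, 3, 1, 3, 3, 1, 1, 3, 1, 3, 1, 2],
  [1, 1, 3, 1, 3, 3, 1, 1, 3, 1, 3, 3],
  [1, 3, 1, 3, 3, 1, 1, 3, 1, 3, 3, 1],
  [3, 1, 3, 3, 1, 1, 3, 1, 3, 3, 1, 1],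
  [],
  [],
  [],
  [1, 1, 2, 0, 2, 2, 0, 0, 2, 0, 2, 0, 3],
  [1, 1, 2, 2, 2, 0, 0, 3, 1, 3, 3, 1, 3, 1],
  [3, 1, 3, 1, 3, 1, 3, 1, 3, 1],
  [0, 0, 2, 0, 2, 2, 0, 2, 2, 0, 2],
  [2, 0, 2, 2, 0, 0, 3, 1, 3, 3, 3, 1, 1],
  [0, 3, 1, 3, 3, 1, 1, 3, 1, 3, 1, 2, 0],
  [],
  [],
  [],
  [],
  [],
  [],
  [],
  [],
  [0, 3, 3, 1, 3, 1, 1, 3, 3, 1, 1, 2, 0],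
  [],
  [],
  [3, 1, 1, 3, 3, 1, 3, 1, 1, 3, 3, 1],
  [2, 0, 2, 2, 0, 2, 0, 0, 2, 0, 2],
  [3, 1, 1, 2, 0, 2, 2, 0, 0, 3, 1, 3, 3],
  [2, 0, 2, 0, 0, 2, 2, 0, 2, 0, 0, 2],
  [2, 2, 0, 2, 0, 0, 2, 0, 2, 2, 0],
  [0, 0, 3, 3, 3, 1, 1, 2, 0, 2, 2, 0, 2, 0],
  [],
  [0, 2, 2, 0, 0, 2, 0, 2, 2, 0, 0, 2],
  [],
  [1, 1, 2, 2, 0, 0, 3, 3, 1, 2, 0, 3, 3, 3],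
  [1, 2, 2, 0, 2, 2, 0, 0, 2, 0, 2, 2, 0, 2],
  [2, 2, 2, 0, 2, 0, 0, 2, 2, 0, 2, 0, 0, 3],
  [2, 0, 0, 2, 2, 0, 2, 0, 0, 2, 2, 0],
  [0, 2, 0, 2, 0, 2, 0, 2, 0, 2],
  [],
  [3, 1, 3, 1, 1, 3, 1, 3, 3, 1, 3],
  [2, 2, 0, 0, 3, 3, 1, 1, 2, 2, 0, 3, 1, 2],
  [],
  [1, 2, 0, 3, 1, 3, 3, 1, 1, 2, 0, 3, 3, 3],
  [1, 2, 0, 2, 2, 0, 2, 0, 0, 2, 2, 0, 2, 2],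
  [0, 2, 2, 0, 0, 3, 1, 3, 3, 3, 1, 1, 2],
  [3, 1, 1, 3, 1, 3, 3, 1, 3, 3, 1],
  [],
  [1, 1, 3, 3, 1, 1, 2, 0, 2, 2, 2, 0, 2],
  [0, 2, 0, 3, 1, 3, 1, 2, 0, 2, 2, 0, 3, 3],
  [2, 2, 0, 3, 1, 2, 0, 2, 2, 0, 0, 3, 1, 2],
  [],
  [1, 2, 2, 2, 0, 2, 0, 0, 2, 2, 0, 2, 0, 2],
  [1, 2, 0, 2, 0, 0, 2, 0, 2, 2, 0, 2, 0],
  [0, 0, 2, 2, 2, 0, 0, 3, 1, 3, 3, 1, 3],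
  [],
  [1, 3, 1, 1, 3, 3, 1, 3, 1, 1, 3, 3],
  [0, 0, 3, 3, 1, 1, 2, 2, 0, 3, 1, 2, 2, 2],
  [2, 0, 3, 1, 3, 1, 2, 0, 2, 2, 0, 3, 1, 2],
  [0, 3, 3, 1, 1, 2, 2, 0, 3, 1, 2, 2, 2, 0],
  [],
  [1, 1, 3, 3, 1, 1, 3, 1, 3, 1, 2, 0, 2],
  [1, 1, 2, 2, 0, 2, 0, 0, 2, 2, 0, 0, 3],
  [],
  [1, 3, 3, 1, 3, 1, 1, 3, 1, 3, 3],
  [1, 3, 3, 1, 1, 3, 1, 3, 3, 1, 1, 3],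
  [0, 2, 0, 2, 0, 0, 2, 0, 2, 2, 0, 0, 3],
  [1, 3, 1, 3, 3, 1, 1, 2, 0, 2, 0, 0, 2],
  [3, 1, 1, 2, 2, 0, 2, 0, 0, 2, 2, 0, 0],
  [],
  [],
  [0, 3, 3, 1, 3, 1, 1, 3, 3, 1, 1, 2, 0],
  [],
  [0, 0, 3, 3, 1, 3, 1, 1, 3, 3, 1, 1, 2],
  [1, 1, 3, 3, 1, 3, 1, 1, 3, 3, 1, 3],
  [1, 3, 3, 1, 3, 1, 1, 3, 3, 1, 3, 1],
  [3, 3, 1, 3, 1, 1, 3, 3, 1, 3, 1, 1],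
  [2, 0, 0, 3, 3, 1, 1, 2, 2, 0, 3, 1, 2, 2],
  [1, 1, 2, 0, 2, 2, 0, 0, 2, 0, 2, 0, 3],
  [],
  [],
  [0, 2, 2, 0, 0, 2, 0, 2, 2, 0, 0, 2],
  [3, 1, 3, 1, 1, 3, 1, 3, 3, 1, 3],
  [1, 1, 3, 3, 1, 1, 2, 0, 2, 2, 2, 0, 2],
  [1, 3, 1, 1, 3, 3, 1, 3, 1, 1, 3, 3],
  [1, 3, 3, 1, 3, 1, 1, 3, 1, 3, 3],
  [],
  [],
  [],
  [],
  [],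
  [],
  [],
  [],
  [1, 2, 0, 2, 2, 0, 0, 2, 0, 2, 0, 3, 1],
  [3, 1, 1, 3, 3, 1, 3, 1, 1, 3, 3, 1],
  [],
  [],
  [0, 0, 2, 2, 0, 0, 2, 0, 2, 0, 3, 1, 3],
  [0, 3, 1, 3, 1, 1, 3, 1, 3, 3, 1, 3, 1],
  [1, 2, 0, 2, 2, 0, 2, 0, 0, 2, 0, 2, 0],
  [3, 3, 1, 3, 1, 1, 3, 1, 3, 3, 1],
  [2, 0, 2, 2, 0, 0, 2, 0, 2, 2, 0, 0],
  [2, 0, 2, 2, 0, 2, 0, 0, 2, 0, 2],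
  [],
  [2, 0, 0, 3, 3, 1, 3, 1, 1, 3, 3, 1, 1],
  [],
  [1, 1, 2, 2, 0, 0, 2, 0, 2, 0, 3, 1, 3, 1],
  [1, 3, 1, 3, 3, 3, 1, 1, 2, 0, 2, 0, 3, 1],
  [0, 3, 3, 1, 3, 1, 1, 3, 1, 3, 3, 1, 1],
  [0, 2, 0, 2, 2, 0, 0, 2, 0, 2, 2, 0],
  [3, 1, 1, 2, 0, 2, 2, 0, 0, 3, 1, 3, 3],
  [],
  [0, 2, 0, 2, 2, 0, 0, 3, 1, 3, 1, 1, 3],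
  [0, 2, 0, 0, 3, 3, 1, 3, 1, 1, 3, 1, 2, 0],
  [],
  [1, 2, 0, 2, 0, 0, 2, 2, 0, 2, 0, 0, 2, 0],
  [0, 0, 3, 3, 1, 3, 1, 1, 3, 1, 3, 1, 2, 0],
  [0, 0, 2, 0, 2, 2, 0, 0, 2, 0, 2, 2],
  [2, 0, 2, 0, 0, 2, 2, 0, 2, 0, 0, 2],
  [],
  [0, 3, 1, 3, 3, 3, 1, 1, 2, 0, 2, 2, 0],
  [0, 0, 3, 3, 1, 1, 2, 0, 2, 2, 2, 0, 2, 0],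
  [0, 0, 2, 0, 0, 3, 3, 1, 3, 1, 1, 3, 1, 2],
  [],
  [1, 1, 3, 3, 1, 3, 1, 1, 3, 1, 3, 1, 2],
  [3, 1, 1, 2, 2, 0, 0, 3, 3, 1, 2, 0, 3, 3],
  [2, 2, 0, 2, 0, 0, 2, 0, 2, 2, 0],
  [],
  [0, 2, 2, 0, 2, 0, 0, 2, 0, 2, 2],
  [0, 0, 2, 2, 0, 2, 0, 0, 2, 0, 2, 0, 3],
  [1, 1, 2, 2, 0, 2, 0, 0, 2, 0, 2, 0, 3, 1],
  [1, 2, 2, 0, 2, 0, 0, 2, 0, 2, 2, 0, 0],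
  [],
  [],
  [0, 0, 3, 3, 3, 1, 1, 2, 0, 2, 2, 0, 2, 0],
  [1, 2, 0, 2, 2, 0, 0, 2, 0, 2, 0, 3, 1],
  [],
  [3, 1, 3, 3, 1, 1, 2, 0, 2, 2, 2, 0, 0],
  [1, 1, 3, 1, 3, 3, 1, 3, 3, 1, 3],
  [2, 0, 2, 0, 2, 0, 2, 0, 2, 0],
  [0, 0, 3, 1, 3, 3, 1, 1, 3, 1, 3, 1, 2],
  [1, 1, 2, 2, 2, 0, 0, 3, 1, 3, 3, 1, 3, 1],
  [],
  [3, 1, 1, 3, 3, 1, 3, 1, 1, 3, 3, 1],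
  [],
  [2, 2, 0, 0, 3, 3, 1, 1, 2, 2, 0, 3, 1, 2],
  [0, 2, 0, 3, 1, 3, 1, 2, 0, 2, 2, 0, 3, 3],
  [0, 0, 3, 3, 1, 1, 2, 2, 0, 3, 1, 2, 2, 2],
  [1, 3, 3, 1, 1, 3, 1, 3, 3, 1, 1, 3],
  [0, 0, 3, 3, 1, 3, 1, 1, 3, 3, 1, 1, 2],
  [0, 2, 2, 0, 0, 2, 0, 2, 2, 0, 0, 2],
  [],
  [],
  [2, 0, 0, 3, 3, 1, 3, 1, 1, 3, 3, 1, 1],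
  [0, 2, 0, 2, 2, 0, 0, 3, 1, 3, 1, 1, 3],
  [0, 3, 1, 3, 3, 3, 1, 1, 2, 0, 2, 2, 0],
  [0, 2, 2, 0, 2, 0, 0, 2, 0, 2, 2],
  [],
  [],
  [],
  [],
  [],
  [],
  [],
  [],
  [1, 1, 3, 3, 3, 1, 1, 2, 0, 2, 2, 0, 2],
  [1, 1, 2, 2, 0, 0, 3, 3, 1, 2, 0, 3, 3, 3],
  [0, 0, 2, 2, 0, 0, 2, 0, 2, 0, 3, 1, 3],
  [],
  [],
  [1, 2, 2, 0, 0, 3, 3, 1, 2, 0, 3, 3, 3, 1],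
  [2, 2, 0, 2, 2, 0, 0, 2, 0, 2, 2, 0, 0, 3],
  [0, 2, 0, 0, 2, 2, 0, 2, 0, 0, 2, 2],
  [2, 0, 0, 2, 0, 2, 2, 0, 2, 2, 0],
  [1, 2, 2, 0, 2, 2, 0, 0, 2, 0, 2, 2, 0, 2],
  [0, 3, 1, 3, 1, 1, 3, 1, 3, 3, 1, 3, 1],
  [],
  [0, 2, 2, 0, 0, 3, 3, 1, 1, 2, 2, 0, 3, 3],
  [],
  [2, 0, 3, 1, 3, 3, 1, 1, 2, 0, 3, 3, 3, 1],
  [0, 0, 2, 2, 0, 0, 3, 1, 3, 3, 3, 1, 3],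
  [1, 3, 1, 3, 1, 3, 1, 3, 1, 3],
  [2, 2, 2, 0, 2, 0, 0, 2, 2, 0, 2, 0, 0, 3],
  [1, 2, 0, 2, 2, 0, 2, 0, 0, 2, 0, 2, 0],
  [],
  [0, 3, 1, 2, 2, 2, 0, 0, 3, 3, 1, 1, 2, 2],
  [0, 2, 2, 0, 3, 1, 2, 0, 2, 2, 0, 0, 3, 3],
  [],
  [2, 0, 2, 0, 0, 2, 0, 2, 2, 0, 2],
  [1, 2, 2, 0, 2, 0, 0, 2, 2, 0, 0, 3, 1],
  [2, 0, 0, 2, 2, 0, 2, 0, 0, 2, 2, 0],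
  [3, 3, 1, 3, 1, 1, 3, 1, 3, 3, 1],
  [],
  [3, 1, 3, 1, 1, 3, 3, 1, 3, 1, 1, 3],
  [2, 0, 0, 3, 1, 3, 3, 1, 1, 2, 0, 2, 2],
  [3, 1, 3, 3, 1, 3, 1, 1, 3, 1, 3],
  [],
  [],
  [0, 2, 0, 2, 0, 2, 0, 2, 0, 2],
  [2, 0, 2, 2, 0, 0, 2, 0, 2, 2, 0, 0],
  [1, 1, 3, 3, 3, 1, 1, 2, 0, 2, 2, 0, 2],
  [],
  [0, 3, 1, 3, 3, 1, 1, 2, 0, 2, 2, 2, 0],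
  [1, 3, 1, 1, 3, 1, 3, 3, 1, 3, 3],
  [1, 1, 3, 1, 3, 3, 1, 1, 3, 1, 3, 3],
  [3, 1, 3, 1, 3, 1, 3, 1, 3, 1],
  [],
  [2, 0, 2, 2, 0, 2, 0, 0, 2, 0, 2],
  [1, 1, 2, 2, 0, 0, 3, 3, 1, 2, 0, 3, 3, 3],
  [],
  [2, 2, 0, 3, 1, 2, 0, 2, 2, 0, 0, 3, 1, 2],
  [2, 0, 3, 1, 3, 1, 2, 0, 2, 2, 0, 3, 1, 2],
  [0, 2, 0, 2, 0, 0, 2, 0, 2, 2, 0, 0, 3],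
  [1, 1, 3, 3, 1, 3, 1, 1, 3, 3, 1, 3],
  [3, 1, 3, 1, 1, 3, 1, 3, 3, 1, 3],
  [],
  [0, 0, 2, 2, 0, 0, 2, 0, 2, 0, 3, 1, 3],
  [],
  [0, 2, 0, 0, 3, 3, 1, 3, 1, 1, 3, 1, 2, 0],
  [0, 0, 3, 3, 1, 1, 2, 0, 2, 2, 2, 0, 2, 0],
  [0, 0, 2, 2, 0, 2, 0, 0, 2, 0, 2, 0, 3],
  [3, 1, 3, 3, 1, 1, 2, 0, 2, 2, 2, 0, 0],
  [2, 2, 0, 0, 3, 3, 1, 1, 2, 2, 0, 3, 1, 2],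
  [2, 0, 0, 3, 3, 1, 3, 1, 1, 3, 3, 1, 1],
  [],
  [],
  [0, 2, 2, 0, 0, 3, 3, 1, 1, 2, 2, 0, 3, 3],
  [0, 3, 1, 2, 2, 2, 0, 0, 3, 3, 1, 1, 2, 2],
  [3, 1, 3, 1, 1, 3, 3, 1, 3, 1, 1, 3],
  [],
  [],
  [],
  [],
  [],
  [],
  [],
  [],
  [1, 1, 2, 0, 2, 2, 0, 0, 3, 1, 3, 3, 3],
  [1, 2, 0, 3, 1, 3, 3, 1, 1, 2, 0, 3, 3, 3],
  [1, 1, 2, 2, 0, 0, 2, 0, 2, 0, 3, 1, 3, 1],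
  [1, 2, 2, 0, 0, 3, 3, 1, 2, 0, 3, 3, 3, 1],
  [],
  [],
  [1, 1, 3, 3, 1, 1, 2, 2, 0, 3, 1, 2, 2, 2],
  [0, 0, 2, 0, 0, 2, 2, 0, 2, 0, 0, 2, 0, 3],
  [0, 2, 0, 0, 2, 0, 2, 2, 0, 2, 2],
  [1, 2, 0, 2, 2, 0, 2, 0, 0, 2, 2, 0, 2, 2],
  [1, 3, 1, 3, 3, 3, 1, 1, 2, 0, 2, 0, 3, 1],
  [2, 2, 0, 2, 2, 0, 0, 2, 0, 2, 2, 0, 0, 3],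
  [],
  [0, 0, 2, 2, 0, 0, 3, 3, 1, 2, 0, 3, 3, 3],
  [],
  [1, 1, 2, 2, 0, 0, 3, 1, 3, 3, 3, 1, 3, 1],
  [2, 2, 0, 2, 0, 0, 2, 2, 0, 2, 0, 0],
  [0, 2, 2, 0, 0, 3, 1, 3, 3, 3, 1, 1, 2],
  [0, 3, 3, 1, 3, 1, 1, 3, 1, 3, 3, 1, 1],
  [0, 2, 0, 0, 2, 2, 0, 2, 0, 0, 2, 2],
  [],
  [0, 3, 1, 3, 1, 1, 3, 3, 1, 3, 1, 1, 3, 1],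
  [0, 2, 0, 2, 2, 2, 0, 0, 3, 1, 3, 1, 2, 0],
  [],
  [],
  [3, 1, 1, 3, 1, 3, 3, 1, 3, 3, 1],
  [0, 2, 0, 2, 2, 0, 0, 2, 0, 2, 2, 0],
  [2, 0, 0, 2, 0, 2, 2, 0, 2, 2, 0],
  [1, 1, 2, 0, 2, 2, 0, 0, 3, 1, 3, 3, 3],
  [],
  [0, 0, 3, 1, 3, 3, 1, 1, 2, 0, 2, 2, 2],
  [1, 3, 1, 3, 3, 1, 1, 3, 1, 3, 3, 1],
  [0, 0, 2, 0, 2, 2, 0, 2, 2, 0, 2],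
  [],
  [3, 1, 1, 2, 0, 2, 2, 0, 0, 3, 1, 3, 3],
  [1, 2, 2, 0, 2, 2, 0, 0, 2, 0, 2, 2, 0, 2],
  [1, 2, 0, 3, 1, 3, 3, 1, 1, 2, 0, 3, 3, 3],
  [],
  [0, 3, 3, 1, 1, 2, 2, 0, 3, 1, 2, 2, 2, 0],
  [1, 3, 1, 3, 3, 1, 1, 2, 0, 2, 0, 0, 2],
  [1, 3, 3, 1, 3, 1, 1, 3, 3, 1, 3, 1],
  [1, 1, 3, 3, 1, 1, 2, 0, 2, 2, 2, 0, 2],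
  [],
  [0, 3, 1, 3, 1, 1, 3, 1, 3, 3, 1, 3, 1],
  [1, 1, 2, 2, 0, 0, 2, 0, 2, 0, 3, 1, 3, 1],
  [],
  [0, 0, 2, 0, 0, 3, 3, 1, 3, 1, 1, 3, 1, 2],
  [1, 1, 2, 2, 0, 2, 0, 0, 2, 0, 2, 0, 3, 1],
  [1, 1, 3, 1, 3, 3, 1, 3, 3, 1, 3],
  [0, 2, 0, 3, 1, 3, 1, 2, 0, 2, 2, 0, 3, 3],
  [0, 2, 0, 2, 2, 0, 0, 3, 1, 3, 1, 1, 3],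
  [],
  [1, 2, 2, 0, 0, 3, 3, 1, 2, 0, 3, 3, 3, 1],
  [],
  [0, 2, 2, 0, 3, 1, 2, 0, 2, 2, 0, 0, 3, 3],
  [2, 0, 0, 3, 1, 3, 3, 1, 1, 2, 0, 2, 2],
  [0, 3, 1, 3, 3, 1, 1, 2, 0, 2, 2, 2, 0],
  [2, 2, 0, 3, 1, 2, 0, 2, 2, 0, 0, 3, 1, 2],
  [0, 2, 0, 0, 3, 3, 1, 3, 1, 1, 3, 1, 2, 0],
  [0, 2, 2, 0, 0, 3, 3, 1, 1, 2, 2, 0, 3, 3],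
  [],
  [],
  [0, 0, 2, 2, 0, 0, 3, 3, 1, 2, 0, 3, 3, 3],
  [0, 3, 1, 3, 1, 1, 3, 3, 1, 3, 1, 1, 3, 1],
  [],
  [],
  [],
  [],
  [],
  [],
  [],
  [],
  [1, 2, 0, 2, 2, 0, 0, 3, 1, 3, 3, 3, 1],
  [1, 2, 2, 2, 0, 2, 0, 0, 2, 2, 0, 2, 0, 2],
  [1, 2, 0, 2, 0, 0, 2, 2, 0, 2, 0, 0, 2, 0],
  [2, 0, 3, 1, 3, 3, 1, 1, 2, 0, 3, 3, 3, 1],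
  [1, 1, 3, 3, 1, 1, 2, 2, 0, 3, 1, 2, 2, 2],
  [],
  [],
  [1, 3, 1, 1, 2, 2, 0, 2, 0, 0, 2, 0, 3, 1],
  [0, 2, 2, 0, 2, 0, 0, 2, 2, 0, 2, 0],
  [1, 2, 0, 2, 0, 0, 2, 0, 2, 2, 0, 2, 0],
  [0, 0, 3, 3, 1, 3, 1, 1, 3, 1, 3, 1, 2, 0],
  [0, 0, 2, 2, 0, 0, 3, 1, 3, 3, 3, 1, 3],
  [0, 0, 2, 0, 0, 2, 2, 0, 2, 0, 0, 2, 0, 3],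
  [],
  [0, 0, 3, 3, 1, 1, 3, 1, 3, 1, 2, 0, 2, 0],
  [],
  [],
  [0, 0, 2, 2, 2, 0, 0, 3, 1, 3, 3, 1, 3],
  [0, 0, 2, 0, 2, 2, 0, 0, 2, 0, 2, 2],
  [1, 3, 1, 3, 1, 3, 1, 3, 1, 3],
  [0, 2, 0, 0, 2, 0, 2, 2, 0, 2, 2],
  [1, 2, 0, 2, 2, 0, 0, 3, 1, 3, 3, 3, 1],
  [],
  [3, 1, 3, 3, 1, 1, 3, 1, 3, 3, 1, 1],
  [2, 0, 2, 2, 0, 0, 3, 1, 3, 3, 3, 1, 1],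
  [],
  [2, 0, 2, 0, 0, 2, 2, 0, 2, 0, 0, 2],
  [2, 2, 2, 0, 2, 0, 0, 2, 2, 0, 2, 0, 0, 3],
  [1, 2, 0, 2, 2, 0, 2, 0, 0, 2, 2, 0, 2, 2],
  [1, 2, 2, 2, 0, 2, 0, 0, 2, 2, 0, 2, 0, 2],
  [],
  [3, 1, 1, 2, 2, 0, 2, 0, 0, 2, 2, 0, 0],
  [3, 3, 1, 3, 1, 1, 3, 3, 1, 3, 1, 1],
  [1, 3, 1, 1, 3, 3, 1, 3, 1, 1, 3, 3],
  [],
  [1, 2, 0, 2, 2, 0, 2, 0, 0, 2, 0, 2, 0],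
  [1, 3, 1, 3, 3, 3, 1, 1, 2, 0, 2, 0, 3, 1],
  [1, 2, 0, 2, 0, 0, 2, 2, 0, 2, 0, 0, 2, 0],
  [],
  [1, 2, 2, 0, 2, 0, 0, 2, 0, 2, 2, 0, 0],
  [2, 0, 2, 0, 2, 0, 2, 0, 2, 0],
  [0, 0, 3, 3, 1, 1, 2, 2, 0, 3, 1, 2, 2, 2],
  [0, 3, 1, 3, 3, 3, 1, 1, 2, 0, 2, 2, 0],
  [],
  [2, 2, 0, 2, 2, 0, 0, 2, 0, 2, 2, 0, 0, 3],
  [2, 0, 3, 1, 3, 3, 1, 1, 2, 0, 3, 3, 3, 1],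
  [],
  [3, 1, 3, 3, 1, 3, 1, 1, 3, 1, 3],
  [1, 3, 1, 1, 3, 1, 3, 3, 1, 3, 3],
  [2, 0, 3, 1, 3, 1, 2, 0, 2, 2, 0, 3, 1, 2],
  [0, 0, 3, 3, 1, 1, 2, 0, 2, 2, 2, 0, 2, 0],
  [0, 3, 1, 2, 2, 2, 0, 0, 3, 3, 1, 1, 2, 2],
  [],
  [1, 1, 3, 3, 1, 1, 2, 2, 0, 3, 1, 2, 2, 2],
  [],
  [0, 2, 0, 2, 2, 2, 0, 0, 3, 1, 3, 1, 2, 0],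
  [0, 0, 3, 1, 3, 3, 1, 1, 2, 0, 2, 2, 2],
  [0, 3, 3, 1, 1, 2, 2, 0, 3, 1, 2, 2, 2, 0],
  [0, 0, 2, 0, 0, 3, 3, 1, 3, 1, 1, 3, 1, 2],
  [0, 2, 2, 0, 3, 1, 2, 0, 2, 2, 0, 0, 3, 3],
  [0, 0, 2, 2, 0, 0, 3, 3, 1, 2, 0, 3, 3, 3],
  [],
  [],
  [0, 0, 3, 3, 1, 1, 3, 1, 3, 1, 2, 0, 2, 0],
  [],
  [],
  [],
  [],
  [],
  [],
  [],
  [],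
  [0, 0, 2, 2, 0, 2, 0, 0, 2, 2, 0, 2],
  [1, 1, 3, 3, 1, 1, 3, 1, 3, 1, 2, 0, 2],
  [1, 1, 3, 3, 1, 3, 1, 1, 3, 1, 3, 1, 2],
  [2, 0, 2, 0, 0, 2, 0, 2, 2, 0, 2],
  [1, 1, 2, 2, 0, 0, 3, 1, 3, 3, 3, 1, 3, 1],
  [1, 3, 1, 1, 2, 2, 0, 2, 0, 0, 2, 0, 3, 1],
  [],
  [],
  [],
  [1, 1, 2, 2, 0, 2, 0, 0, 2, 2, 0, 0, 3],
  [3, 1, 1, 2, 2, 0, 0, 3, 3, 1, 2, 0, 3, 3],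
  [1, 2, 2, 0, 2, 0, 0, 2, 2, 0, 0, 3, 1],
  [2, 2, 0, 2, 0, 0, 2, 2, 0, 2, 0, 0],
  [0, 2, 2, 0, 2, 0, 0, 2, 2, 0, 2, 0],
  [0, 0, 2, 2, 0, 2, 0, 0, 2, 2, 0, 2],
  [],
  [0, 3, 1, 3, 3, 1, 1, 3, 1, 3, 1, 2, 0],
  [],
  [2, 2, 0, 2, 0, 0, 2, 0, 2, 2, 0],
  [2, 0, 0, 2, 2, 0, 2, 0, 0, 2, 2, 0],
  [0, 2, 2, 0, 0, 3, 1, 3, 3, 3, 1, 1, 2],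
  [1, 2, 0, 2, 0, 0, 2, 0, 2, 2, 0, 2, 0],
  [1, 1, 3, 3, 1, 1, 3, 1, 3, 1, 2, 0, 2],
  [],
  [2, 0, 0, 3, 3, 1, 1, 2, 2, 0, 3, 1, 2, 2],
  [1, 3, 3, 1, 3, 1, 1, 3, 1, 3, 3],
  [],
  [3, 3, 1, 3, 1, 1, 3, 1, 3, 3, 1],
  [0, 3, 3, 1, 3, 1, 1, 3, 1, 3, 3, 1, 1],
  [0, 0, 3, 3, 1, 3, 1, 1, 3, 1, 3, 1, 2, 0],
  [1, 1, 3, 3, 1, 3, 1, 1, 3, 1, 3, 1, 2],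
  [],
  [0, 0, 3, 1, 3, 3, 1, 1, 3, 1, 3, 1, 2],
  [1, 3, 3, 1, 1, 3, 1, 3, 3, 1, 1, 3],
  [0, 2, 2, 0, 2, 0, 0, 2, 0, 2, 2],
  [],
  [0, 2, 0, 0, 2, 2, 0, 2, 0, 0, 2, 2],
  [0, 0, 2, 2, 0, 0, 3, 1, 3, 3, 3, 1, 3],
  [2, 0, 2, 0, 0, 2, 0, 2, 2, 0, 2],
  [],
  [1, 1, 3, 1, 3, 3, 1, 1, 3, 1, 3, 3],
  [0, 2, 0, 2, 0, 0, 2, 0, 2, 2, 0, 0, 3],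
  [0, 0, 2, 2, 0, 2, 0, 0, 2, 0, 2, 0, 3],
  [3, 1, 3, 1, 1, 3, 3, 1, 3, 1, 1, 3],
  [],
  [0, 0, 2, 0, 0, 2, 2, 0, 2, 0, 0, 2, 0, 3],
  [1, 1, 2, 2, 0, 0, 3, 1, 3, 3, 3, 1, 3, 1],
  [],
  [1, 3, 1, 3, 3, 1, 1, 3, 1, 3, 3, 1],
  [1, 3, 1, 3, 3, 1, 1, 2, 0, 2, 0, 0, 2],
  [1, 1, 2, 2, 0, 2, 0, 0, 2, 0, 2, 0, 3, 1],
  [2, 0, 0, 3, 1, 3, 3, 1, 1, 2, 0, 2, 2],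
  [0, 3, 1, 3, 1, 1, 3, 3, 1, 3, 1, 1, 3, 1],
  [],
  [1, 3, 1, 1, 2, 2, 0, 2, 0, 0, 2, 0, 3, 1],
  [],
  [3, 1, 3, 3, 1, 1, 3, 1, 3, 3, 1, 1],
  [3, 1, 1, 2, 2, 0, 2, 0, 0, 2, 2, 0, 0],
  [1, 2, 2, 0, 2, 0, 0, 2, 0, 2, 2, 0, 0],
  [3, 1, 3, 3, 1, 3, 1, 1, 3, 1, 3],
  [0, 2, 0, 2, 2, 2, 0, 0, 3, 1, 3, 1, 2, 0],
  [0, 0, 3, 3, 1, 1, 3, 1, 3, 1, 2, 0, 2, 0],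
  [],
  [],
  [],
  [],
  [],
  [],
  [],
  [],
  [],
  []]

def w3 (x y z : Fin 8) : List (Fin 4) := List.getD wtab (x.val * 64 + y.val * 8 + z.val) []

set_option maxHeartbeats 4000000 in
lemma w3_spec : ∀ x y z : Fin 8, x ≠ y → x ≠ z → y ≠ z → ∀ u : Fin 8,
    evalWord (w3 x y z) u = (Equiv.swap x z * Equiv.swap x y) u := by decide

lemma threeCycle_mem {x y z : Fin 8} (hxy : x ≠ y) (hxz : x ≠ z) (hyz : y ≠ z) :
    Equiv.swap x z * Equiv.swap x y ∈ H := by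
  have : Equiv.swap x z * Equiv.swap x y = evalWord (w3 x y z) :=
    Equiv.ext fun u => (w3_spec x y z hxy hxz hyz u).symm
  rw [this]
  exact evalWord_mem _

lemma cyc_eq {x y z : Fin 8} (hxy : x ≠ y) (hxz : x ≠ z) (hyz : y ≠ z)
    {σ : Equiv.Perm (Fin 8)} (hsupp : σ.support = {x, y, z})
    (h1 : σ x = y) (h2 : σ y = z) (h3 : σ z = x) :
    σ = Equiv.swap x z * Equiv.swap x y := by
  apply Equiv.ext
  intro u
  rcases eq_or_ne u x with rfl | hux
  · rw [Equiv.Perm.mul_apply, Equiv.swap_apply_left,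
      Equiv.swap_apply_of_ne_of_ne hxy.symm hyz, h1]
  rcases eq_or_ne u y with rfl | huy
  · rw [Equiv.Perm.mul_apply, Equiv.swap_apply_right, Equiv.swap_apply_left, h2]
  rcases eq_or_ne u z with rfl | huz
  · rw [Equiv.Perm.mul_apply, Equiv.swap_apply_of_ne_of_ne (Ne.symm hxz) (Ne.symm hyz),
      Equiv.swap_apply_right, h3]
  have hu : σ u = u := by
    apply Equiv.Perm.notMem_support.mp
    rw [hsupp]
    simp [hux, huy, huz]
  rw [Equiv.Perm.mul_apply, Equiv.swap_apply_of_ne_of_ne hux huy,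
    Equiv.swap_apply_of_ne_of_ne hux huz, hu]

lemma isThreeCycle_decomp {σ : Equiv.Perm (Fin 8)} (h : σ.IsThreeCycle) :
    ∃ x y z : Fin 8, x ≠ y ∧ x ≠ z ∧ y ≠ z ∧ σ = Equiv.swap x z * Equiv.swap x y := by
  obtain ⟨x, y, z, hxy, hxz, hyz, hs⟩ := Finset.card_eq_three.mp h.card_support
  have hxs : x ∈ σ.support := by rw [hs]; simp
  have hys : y ∈ σ.support := by rw [hs]; simp
  have hzs : z ∈ σ.support := by rw [hs]; simp
  have fx : σ x ≠ x := Equiv.Perm.mem_support.mp hxs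
  have fy : σ y ≠ y := Equiv.Perm.mem_support.mp hys
  have fz : σ z ≠ z := Equiv.Perm.mem_support.mp hzs
  have img : ∀ u, u ∈ σ.support → (σ u = x ∨ σ u = y ∨ σ u = z) := by
    intro u hu
    have : σ u ∈ σ.support := Equiv.Perm.apply_mem_support.mpr hu
    rw [hs] at this
    simpa using this
  rcases img x hxs with h1 | h1 | h1
  · exact absurd h1 fx
  · -- σ x = y
    have h2 : σ y = z := by
      rcases img y hys with h2 | h2 | h2
      · exfalso
        rcases img z hzs with h3 | h3 | h3
        · exact hyz (σ.injective (h2.trans h3.symm))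
        · exact hxz (σ.injective (h1.trans h3.symm))
        · exact fz h3
      · exact absurd h2 fy
      · exact h2
    have h3 : σ z = x := by
      rcases img z hzs with h3 | h3 | h3
      · exact h3
      · exact absurd (σ.injective (h1.trans h3.symm)) hxz
      · exact absurd h3 fz
    exact ⟨x, y, z, hxy, hxz, hyz, cyc_eq hxy hxz hyz hs h1 h2 h3⟩
  · -- σ x = z
    have h3 : σ z = y := by
      rcases img z hzs with h3 | h3 | h3
      · exfalso
        rcases img y hys with h2 | h2 | h2
        · exact hyz (σ.injective (h2.trans h3.symm))
        · exact fy h2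
        · exact hxy (σ.injective (h1.trans h2.symm))
      · exact h3
      · exact absurd h3 fz
    have h2 : σ y = x := by
      rcases img y hys with h2 | h2 | h2
      · exact h2
      · exact absurd h2 fy
      · exact absurd (σ.injective (h1.trans h2.symm)) hxy
    have hs' : σ.support = {x, z, y} := by
      rw [hs]
      congr 1
      exact Finset.pair_comm y z
    exact ⟨x, z, y, hxz, hxy, Ne.symm hyz,
      cyc_eq hxz hxy (Ne.symm hyz) hs' h1 h3 h2⟩

lemma H_eq : H = alternatingGroup (Fin 8) := by
  apply le_antisymm
  · rw [H, Subgroup.closure_le]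
    rintro x (rfl | rfl)
    · exact Equiv.Perm.mem_alternatingGroup.mpr sign_a
    · exact Equiv.Perm.mem_alternatingGroup.mpr sign_b
  · rw [← Equiv.Perm.closure_three_cycles_eq_alternating, Subgroup.closure_le]
    intro σ hσ
    obtain ⟨x, y, z, hxy, hxz, hyz, rfl⟩ := isThreeCycle_decomp hσ
    exact threeCycle_mem hxy hxz hyz

theorem P_mulEquiv_alternatingGroup_fin8 :
    Nonempty (P ≃* alternatingGroup (Fin 8)) := by
  have hinj : Function.Injective (Φ.comp (alternatingGroup (Fin 8)).subtype) :=
    Φ_injective.comp (Subgroup.subtype_injective _)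
  have hrange : (Φ.comp (alternatingGroup (Fin 8)).subtype).range = P := by
    rw [MonoidHom.range_comp, Subgroup.range_subtype, ← H_eq, H,
      MonoidHom.map_closure, Set.image_pair, Φ_a, Φ_b]
    rfl
  exact ⟨((MonoidHom.ofInjective hinj).trans (MulEquiv.subgroupCongr hrange)).symm⟩

end Stmt5
end

section
/- There exists a bijection φ from the 28-point set {1,…,28} to the set of 2-element subsets of an 8-element set such that a three-element subset {x,y,z} of {1,…,28} belongs to the family L of 56 lines (listed in the context) if and only if the union φ(x) ∪ φ(y) ∪ φ(z) has exactly 3 elements (equivalently, φ(x), φ(y), φ(z) are of the form {a,b}, {a,c}, {b,c} for three distinct elements a, b, c). In other words, the [28₆, 56₃] configuration L is isomorphic to the combinatorial Grassmannian Gr(2,8). -/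
set_option maxRecDepth 100000
set_option maxHeartbeats 4000000


namespace Stmt7

/-- The family `L` of 56 three-element subsets of `{1,…,28}` (the lines of the
`[28₆, 56₃]` configuration stabilized at index 28). -/
def L : Finset (Finset ℕ) :=
  { {1,7,27}, {1,15,23}, {15,17,27}, {7,17,23}, {1,5,26}, {5,18,27}, {5,15,24},
    {23,24,26}, {17,18,24}, {7,18,26}, {12,14,17}, {1,9,22}, {5,8,9}, {9,14,15},
    {7,12,22}, {8,12,18}, {8,14,24}, {8,22,26}, {14,22,23}, {9,12,27}, {3,10,15},
    {3,6,24}, {3,17,25}, {3,23,28}, {1,10,28}, {3,14,19}, {7,25,28}, {6,8,19},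
    {19,22,28}, {5,6,10}, {12,19,25}, {10,25,27}, {9,10,19}, {6,18,25}, {6,26,28},
    {4,11,12}, {11,21,25}, {6,20,21}, {2,3,21}, {2,4,14}, {7,11,16}, {2,16,23},
    {1,13,16}, {2,11,17}, {4,19,21}, {16,20,26}, {2,13,15}, {11,13,27}, {16,21,28},
    {2,20,24}, {5,13,20}, {11,18,20}, {4,9,13}, {4,8,20}, {4,16,22}, {10,13,21} }

def phi : ℕ → Finset (Fin 8)
  | 1 => {0, 1}
  | 2 => {2, 3}
  | 3 => {2, 4}
  | 4 => {3, 5}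
  | 5 => {0, 6}
  | 6 => {4, 6}
  | 7 => {1, 7}
  | 8 => {5, 6}
  | 9 => {0, 5}
  | 10 => {0, 4}
  | 11 => {3, 7}
  | 12 => {5, 7}
  | 13 => {0, 3}
  | 14 => {2, 5}
  | 15 => {0, 2}
  | 16 => {1, 3}
  | 17 => {2, 7}
  | 18 => {6, 7}
  | 19 => {4, 5}
  | 20 => {3, 6}
  | 21 => {3, 4}
  | 22 => {1, 5}
  | 23 => {1, 2}
  | 24 => {2, 6}
  | 25 => {4, 7}
  | 26 => {1, 6}
  | 27 => {0, 7}
  | 28 => {1, 4}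
  | _ => ∅

lemma phi_maps : ∀ x ∈ Finset.Icc 1 28, (phi x).card = 2 := by decide

lemma phi_inj : ∀ x ∈ Finset.Icc 1 28, ∀ y ∈ Finset.Icc 1 28,
    phi x = phi y → x = y := by decide

lemma phi_surj : ∀ s ∈ (Finset.univ : Finset (Fin 8)).powersetCard 2,
    ∃ x ∈ Finset.Icc 1 28, phi x = s := by decide

def lines : List (ℕ × ℕ × ℕ) :=
  [(1,7,27), (1,15,23), (15,17,27), (7,17,23), (1,5,26), (5,18,27), (5,15,24), (23,24,26), (17,18,24), (7,18,26), (12,14,17), (1,9,22), (5,8,9), (9,14,15), (7,12,22), (8,12,18), (8,14,24), (8,22,26), (14,22,23), (9,12,27), (3,10,15), (3,6,24), (3,17,25), (3,23,28), (1,10,28), (3,14,19), (7,25,28), (6,8,19), (19,22,28), (5,6,10), (12,19,25), (10,25,27), (9,10,19), (6,18,25), (6,26,28), (4,11,12), (11,21,25), (6,20,21), (2,3,21), (2,4,14), (7,11,16), (2,16,23), (1,13,16), (2,11,17), (4,19,21), (16,20,26), (2,13,15), (11,13,27), (16,21,28), (2,20,24), (5,13,20), (11,18,20), (4,9,13), (4,8,20),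 (4,16,22), (10,13,21)]

lemma triple_eq {x y z : ℕ} (h1 : x < y) (h2 : y < z) {a b c : ℕ} (h3 : a < b) (h4 : b < c) :
    (({x, y, z} : Finset ℕ) = {a, b, c}) ↔ (x = a ∧ y = b ∧ z = c) := by
  constructor
  · intro h
    have hx : x ∈ ({a, b, c} : Finset ℕ) := h ▸ (by simp)
    have hy : y ∈ ({a, b, c} : Finset ℕ) := h ▸ (by simp)
    have hz : z ∈ ({a, b, c} : Finset ℕ) := h ▸ (by simp)
    have ha : a ∈ ({x, y, z} : Finset ℕ) := h ▸ (by simp)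
    have hb : b ∈ ({x, y, z} : Finset ℕ) := h ▸ (by simp)
    have hc : c ∈ ({x, y, z} : Finset ℕ) := h ▸ (by simp)
    simp only [Finset.mem_insert, Finset.mem_singleton] at hx hy hz ha hb hc
    omega
  · rintro ⟨rfl, rfl, rfl⟩; rfl

lemma memL (x y z : ℕ) (h1 : x < y) (h2 : y < z) :
    (({x, y, z} : Finset ℕ) ∈ L) ↔ ((x, y, z) ∈ lines) := by
  simp (config := { decide := true }) only [L, lines, Finset.mem_insert, Finset.mem_singleton,
    List.mem_cons, List.not_mem_nil, or_false, Prod.mk.injEq, triple_eq h1 h2]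

lemma keyAux : ∀ x ∈ Finset.Icc 1 28, ∀ y ∈ Finset.Icc 1 28, ∀ z ∈ Finset.Icc 1 28,
    x < y → y < z → (((x, y, z) ∈ lines) ↔ (phi x ∪ phi y ∪ phi z).card = 3) := by decide

lemma key' : ∀ x ∈ Finset.Icc 1 28, ∀ y ∈ Finset.Icc 1 28, ∀ z ∈ Finset.Icc 1 28,
    x < y → y < z →
      (({x, y, z} : Finset ℕ) ∈ L ↔ (phi x ∪ phi y ∪ phi z).card = 3) := by
  intro x hx y hy z hz h1 h2
  rw [memL x y z h1 h2]
  exact keyAux x hx y hy z hz h1 h2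

lemma tperm (a b c : ℕ) : ({a, b, c} : Finset ℕ) = {b, a, c} ∧
    ({a, b, c} : Finset ℕ) = {a, c, b} := by
  constructor <;> (ext t; simp; tauto)

lemma uperm (a b c : Finset (Fin 8)) : a ∪ b ∪ c = b ∪ a ∪ c ∧ a ∪ b ∪ c = a ∪ c ∪ b := by
  constructor <;> (ext t; simp; tauto)

lemma key : ∀ x ∈ Finset.Icc 1 28, ∀ y ∈ Finset.Icc 1 28, ∀ z ∈ Finset.Icc 1 28,
    x ≠ y → x ≠ z → y ≠ z →
      (({x, y, z} : Finset ℕ) ∈ L ↔ (phi x ∪ phi y ∪ phi z).card = 3) := by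
  intro x hx y hy z hz hxy hxz hyz
  rcases Nat.lt_trichotomy x y with h1 | h1 | h1
  · rcases Nat.lt_trichotomy y z with h2 | h2 | h2
    · exact key' x hx y hy z hz h1 h2
    · exact absurd h2 hyz
    · rcases Nat.lt_trichotomy x z with h3 | h3 | h3
      · -- x < z < y
        rw [(tperm x y z).2, (uperm (phi x) (phi y) (phi z)).2]
        exact key' x hx z hz y hy h3 h2
      · exact absurd h3 hxz
      · -- z < x < y
        rw [(tperm x y z).2, (tperm x z y).1,
            (uperm (phi x) (phi y) (phi z)).2, (uperm (phi x) (phi z) (phi y)).1]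
        exact key' z hz x hx y hy h3 h1
  · exact absurd h1 hxy
  · rcases Nat.lt_trichotomy x z with h2 | h2 | h2
    · -- y < x < z
      rw [(tperm x y z).1, (uperm (phi x) (phi y) (phi z)).1]
      exact key' y hy x hx z hz h1 h2
    · exact absurd h2 hxz
    · rcases Nat.lt_trichotomy y z with h3 | h3 | h3
      · -- y < z < x
        rw [(tperm x y z).1, (tperm y x z).2, (uperm (phi x) (phi y) (phi z)).1,
            (uperm (phi y) (phi x) (phi z)).2]
        exact key' y hy z hz x hx h3 h2
      · exact absurd h3 hyz
      · -- z < y < x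
        rw [(tperm x y z).2, (tperm x z y).1, (tperm z x y).2,
            (uperm (phi x) (phi y) (phi z)).2, (uperm (phi x) (phi z) (phi y)).1,
            (uperm (phi z) (phi x) (phi y)).2]
        exact key' z hz y hy x hx h3 h1

/-- The configuration `L` is isomorphic to the combinatorial Grassmannian `Gr(2,8)`:
there is a bijection `φ` from the 28 points `{1,…,28}` onto the 2-element subsets of an
8-element set such that `{x,y,z} ∈ L` iff `φ x ∪ φ y ∪ φ z` has exactly 3 elements. -/
theorem L_isomorphic_to_combinatorial_grassmannian_Gr_2_8 :
    ∃ φ : ℕ → Finset (Fin 8),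
      Set.BijOn φ (Finset.Icc 1 28 : Finset ℕ) {s : Finset (Fin 8) | s.card = 2} ∧
      ∀ x ∈ Finset.Icc 1 28, ∀ y ∈ Finset.Icc 1 28, ∀ z ∈ Finset.Icc 1 28,
        x ≠ y → x ≠ z → y ≠ z →
          (({x, y, z} : Finset ℕ) ∈ L ↔ (φ x ∪ φ y ∪ φ z).card = 3) := by
  refine ⟨phi, ⟨?_, ?_, ?_⟩, key⟩
  · intro x hx
    simpa using phi_maps x (by simpa using hx)
  · intro x hx y hy h
    exact phi_inj x (by simpa using hx) y (by simpa using hy) h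
  · intro s hs
    obtain ⟨x, hx, hxs⟩ := phi_surj s (by
      simpa [Finset.mem_powersetCard_univ] using hs)
    exact ⟨x, by simpa using hx, hxs⟩

end Stmt7
end

section
/- Let P be the subgroup of the symmetric group on the seven letters {1,…,7} generated by the permutations (1,2,4,5,6,7,3) and (2,5,6)(3,7,4). Then: (a) for every pair of distinct letters α, β, the two-point stabilizer P_(α,β) = {p ∈ P | p(α) = α and p(β) = β} is isomorphic to the Klein four-group ℤ/2 × ℤ/2; (b) there are exactly 7 distinct subgroups of P arising as such two-point stabilizers; (c) for each such stabilizer subgroup S, the set ℓ(S) of letters occurring in some pair (α,β) with P_(α,β) = S has exactly 3 elements; and (d) every 2-element subset of {1,…,7} is contained in exactly one of the seven 3-element sets ℓ(S); i.e., these seven lines form the Fano plane (the Steiner triple system S(2,3,7)). -/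
open Pointwise

set_option maxRecDepth 10000
set_option maxHeartbeats 1000000

namespace Stmt17

/-- The 7-letter permutation group `P = ⟨(1,2,4,5,6,7,3), (2,5,6)(3,7,4)⟩`
(the letter `7` is represented by `(7 : Fin 7) = 0`). -/
def P : Subgroup (Equiv.Perm (Fin 7)) :=
  Subgroup.closure {c[1, 2, 4, 5, 6, 7, 3], c[2, 5, 6] * c[3, 7, 4]}

/-- The two-point stabilizer subgroup `P_(α,β) = {p ∈ P | p α = α ∧ p β = β}` of `P`. -/
def twoPointStab (α β : Fin 7) : Subgroup P :=
  MulAction.stabilizer P α ⊓ MulAction.stabilizer P β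

/-- The line associated with a two-point stabilizer subgroup `S` of `P`: the set of
letters occurring in some pair `(α, β)` of distinct letters with `P_(α,β) = S`. -/
def lineOf (S : Subgroup P) : Set (Fin 7) :=
  {x : Fin 7 | ∃ α β : Fin 7, α ≠ β ∧ twoPointStab α β = S ∧ (x = α ∨ x = β)}

def aa : Equiv.Perm (Fin 7) := c[1, 2, 4, 5, 6, 7, 3]
def bb : Equiv.Perm (Fin 7) := c[2, 5, 6] * c[3, 7, 4]

lemma haP : aa ∈ P := Subgroup.subset_closure (Set.mem_insert _ _)
lemma hbP : bb ∈ P := Subgroup.subset_closure (Set.mem_insert_of_mem _ rfl)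

def L : Finset (Finset (Fin 7)) :=
  {{0,1,2},{0,3,5},{0,4,6},{1,3,6},{1,4,5},{2,3,4},{2,5,6}}

def lineV : Fin 7 → Finset (Fin 7) :=
  ![{0,1,2},{0,3,5},{0,4,6},{1,3,6},{1,4,5},{2,3,4},{2,5,6}]

def lineIdx : Fin 7 → Fin 7 → Fin 7 :=
  ![![(0 : Fin 7), (0 : Fin 7), (0 : Fin 7), (1 : Fin 7), (2 : Fin 7), (1 : Fin 7), (2 : Fin 7)],
    ![(0 : Fin 7), (0 : Fin 7), (0 : Fin 7), (3 : Fin 7), (4 : Fin 7), (4 : Fin 7), (3 : Fin 7)],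
    ![(0 : Fin 7), (0 : Fin 7), (0 : Fin 7), (5 : Fin 7), (5 : Fin 7), (6 : Fin 7), (6 : Fin 7)],
    ![(1 : Fin 7), (3 : Fin 7), (5 : Fin 7), (0 : Fin 7), (5 : Fin 7), (1 : Fin 7), (3 : Fin 7)],
    ![(2 : Fin 7), (4 : Fin 7), (5 : Fin 7), (5 : Fin 7), (0 : Fin 7), (4 : Fin 7), (2 : Fin 7)],
    ![(1 : Fin 7), (4 : Fin 7), (6 : Fin 7), (1 : Fin 7), (4 : Fin 7), (0 : Fin 7), (6 : Fin 7)],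
    ![(2 : Fin 7), (3 : Fin 7), (6 : Fin 7), (3 : Fin 7), (2 : Fin 7), (6 : Fin 7), (0 : Fin 7)]]

def third : Fin 7 → Fin 7 → Fin 7 :=
  ![![(0 : Fin 7), (2 : Fin 7), (1 : Fin 7), (5 : Fin 7), (6 : Fin 7), (3 : Fin 7), (4 : Fin 7)],
    ![(2 : Fin 7), (0 : Fin 7), (0 : Fin 7), (6 : Fin 7), (5 : Fin 7), (4 : Fin 7), (3 : Fin 7)],
    ![(1 : Fin 7), (0 : Fin 7), (0 : Fin 7), (4 : Fin 7), (3 : Fin 7), (6 : Fin 7), (5 : Fin 7)],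
    ![(5 : Fin 7), (6 : Fin 7), (4 : Fin 7), (0 : Fin 7), (2 : Fin 7), (0 : Fin 7), (1 : Fin 7)],
    ![(6 : Fin 7), (5 : Fin 7), (3 : Fin 7), (2 : Fin 7), (0 : Fin 7), (1 : Fin 7), (0 : Fin 7)],
    ![(3 : Fin 7), (4 : Fin 7), (6 : Fin 7), (0 : Fin 7), (1 : Fin 7), (0 : Fin 7), (2 : Fin 7)],
    ![(4 : Fin 7), (3 : Fin 7), (5 : Fin 7), (1 : Fin 7), (0 : Fin 7), (2 : Fin 7), (0 : Fin 7)]]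

def k00 : Equiv.Perm (Fin 7) := c[(3 : Fin 7), 5] * c[(4 : Fin 7), 6]
def k01 : Equiv.Perm (Fin 7) := c[(3 : Fin 7), 4] * c[(5 : Fin 7), 6]
def k02 : Equiv.Perm (Fin 7) := c[(3 : Fin 7), 6] * c[(4 : Fin 7), 5]
def k10 : Equiv.Perm (Fin 7) := c[(1 : Fin 7), 6] * c[(2 : Fin 7), 4]
def k11 : Equiv.Perm (Fin 7) := c[(1 : Fin 7), 4] * c[(2 : Fin 7), 6]
def k12 : Equiv.Perm (Fin 7) := c[(1 : Fin 7), 2] * c[(4 : Fin 7), 6]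
def k20 : Equiv.Perm (Fin 7) := c[(1 : Fin 7), 5] * c[(2 : Fin 7), 3]
def k21 : Equiv.Perm (Fin 7) := c[(1 : Fin 7), 2] * c[(3 : Fin 7), 5]
def k22 : Equiv.Perm (Fin 7) := c[(1 : Fin 7), 3] * c[(2 : Fin 7), 5]
def k30 : Equiv.Perm (Fin 7) := c[(0 : Fin 7), 4] * c[(2 : Fin 7), 5]
def k31 : Equiv.Perm (Fin 7) := c[(0 : Fin 7), 2] * c[(4 : Fin 7), 5]
def k32 : Equiv.Perm (Fin 7) := c[(0 : Fin 7), 5] * c[(2 : Fin 7), 4]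
def k40 : Equiv.Perm (Fin 7) := c[(0 : Fin 7), 2] * c[(3 : Fin 7), 6]
def k41 : Equiv.Perm (Fin 7) := c[(0 : Fin 7), 3] * c[(2 : Fin 7), 6]
def k42 : Equiv.Perm (Fin 7) := c[(0 : Fin 7), 6] * c[(2 : Fin 7), 3]
def k50 : Equiv.Perm (Fin 7) := c[(0 : Fin 7), 5] * c[(1 : Fin 7), 6]
def k51 : Equiv.Perm (Fin 7) := c[(0 : Fin 7), 6] * c[(1 : Fin 7), 5]
def k52 : Equiv.Perm (Fin 7) := c[(0 : Fin 7), 1] * c[(5 : Fin 7), 6]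
def k60 : Equiv.Perm (Fin 7) := c[(0 : Fin 7), 1] * c[(3 : Fin 7), 4]
def k61 : Equiv.Perm (Fin 7) := c[(0 : Fin 7), 4] * c[(1 : Fin 7), 3]
def k62 : Equiv.Perm (Fin 7) := c[(0 : Fin 7), 3] * c[(1 : Fin 7), 4]

lemma k00P : k00 ∈ P := by
  have h : k00 = aa * aa * aa * bb * bb * aa := by decide
  rw [h]; exact (mul_mem (mul_mem (mul_mem (mul_mem (mul_mem haP haP) haP) hbP) hbP) haP)

lemma k01P : k01 ∈ P := by
  have h : k01 = aa * aa * bb * bb * aa * aa * bb := by decide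
  rw [h]; exact (mul_mem (mul_mem (mul_mem (mul_mem (mul_mem (mul_mem haP haP) hbP) hbP) haP) haP) hbP)

lemma k02P : k02 ∈ P := by
  have h : k02 = bb * bb * aa * bb * aa * aa * bb := by decide
  rw [h]; exact (mul_mem (mul_mem (mul_mem (mul_mem (mul_mem (mul_mem hbP hbP) haP) hbP) haP) haP) hbP)

lemma k10P : k10 ∈ P := by
  have h : k10 = aa * bb * aa * bb := by decide
  rw [h]; exact (mul_mem (mul_mem (mul_mem haP hbP) haP) hbP)

lemma k11P : k11 ∈ P := by
  have h : k11 = aa * bb * bb * aa * aa * aa := by decide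
  rw [h]; exact (mul_mem (mul_mem (mul_mem (mul_mem (mul_mem haP hbP) hbP) haP) haP) haP)

lemma k12P : k12 ∈ P := by
  have h : k12 = bb * aa * aa * aa * aa * bb := by decide
  rw [h]; exact (mul_mem (mul_mem (mul_mem (mul_mem (mul_mem hbP haP) haP) haP) haP) hbP)

lemma k20P : k20 ∈ P := by
  have h : k20 = aa * aa * aa * bb := by decide
  rw [h]; exact (mul_mem (mul_mem (mul_mem haP haP) haP) hbP)

lemma k21P : k21 ∈ P := by
  have h : k21 = bb * aa * bb * aa := by decide
  rw [h]; exact (mul_mem (mul_mem (mul_mem hbP haP) hbP) haP)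

lemma k22P : k22 ∈ P := by
  have h : k22 = aa * aa * aa * bb * bb * aa * bb * aa := by decide
  rw [h]; exact (mul_mem (mul_mem (mul_mem (mul_mem (mul_mem (mul_mem (mul_mem haP haP) haP) hbP) hbP) haP) hbP) haP)

lemma k30P : k30 ∈ P := by
  have h : k30 = aa * aa * bb * bb * aa * aa := by decide
  rw [h]; exact (mul_mem (mul_mem (mul_mem (mul_mem (mul_mem haP haP) hbP) hbP) haP) haP)

lemma k31P : k31 ∈ P := by
  have h : k31 = aa * bb * bb * aa * aa * bb * aa := by decide
  rw [h]; exact (mul_mem (mul_mem (mul_mem (mul_mem (mul_mem (mul_mem haP hbP) hbP) haP) haP) hbP) haP)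

lemma k32P : k32 ∈ P := by
  have h : k32 = aa * bb * aa * bb * bb * aa * aa * aa := by decide
  rw [h]; exact (mul_mem (mul_mem (mul_mem (mul_mem (mul_mem (mul_mem (mul_mem haP hbP) haP) hbP) hbP) haP) haP) haP)

lemma k40P : k40 ∈ P := by
  have h : k40 = aa * bb * aa * aa := by decide
  rw [h]; exact (mul_mem (mul_mem (mul_mem haP hbP) haP) haP)

lemma k41P : k41 ∈ P := by
  have h : k41 = bb * aa * aa * bb * bb * aa * aa := by decide
  rw [h]; exact (mul_mem (mul_mem (mul_mem (mul_mem (mul_mem (mul_mem hbP haP) haP) hbP) hbP) haP) haP)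

lemma k42P : k42 ∈ P := by
  have h : k42 = aa * aa * aa * aa * bb * aa * bb * bb := by decide
  rw [h]; exact (mul_mem (mul_mem (mul_mem (mul_mem (mul_mem (mul_mem (mul_mem haP haP) haP) haP) hbP) haP) hbP) hbP)

lemma k50P : k50 ∈ P := by
  have h : k50 = bb * aa * aa * aa := by decide
  rw [h]; exact (mul_mem (mul_mem (mul_mem hbP haP) haP) haP)

lemma k51P : k51 ∈ P := by
  have h : k51 = bb * aa * aa * bb * aa * aa * bb := by decide
  rw [h]; exact (mul_mem (mul_mem (mul_mem (mul_mem (mul_mem (mul_mem hbP haP) haP) hbP) haP) haP) hbP)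

lemma k52P : k52 ∈ P := by
  have h : k52 = aa * aa * aa * bb * aa * bb * bb * aa := by decide
  rw [h]; exact (mul_mem (mul_mem (mul_mem (mul_mem (mul_mem (mul_mem (mul_mem haP haP) haP) hbP) haP) hbP) hbP) haP)

lemma k60P : k60 ∈ P := by
  have h : k60 = aa * aa * bb * aa := by decide
  rw [h]; exact (mul_mem (mul_mem (mul_mem haP haP) hbP) haP)

lemma k61P : k61 ∈ P := by
  have h : k61 = aa * bb * aa * aa * bb * bb * aa := by decide
  rw [h]; exact (mul_mem (mul_mem (mul_mem (mul_mem (mul_mem (mul_mem haP hbP) haP) haP) hbP) hbP) haP)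

lemma k62P : k62 ∈ P := by
  have h : k62 = bb * aa * aa * bb * aa * bb * bb := by decide
  rw [h]; exact (mul_mem (mul_mem (mul_mem (mul_mem (mul_mem (mul_mem hbP haP) haP) hbP) haP) hbP) hbP)

def KV : Fin 7 → Fin 4 → Equiv.Perm (Fin 7) :=
  ![![1, k00, k01, k02],
    ![1, k10, k11, k12],
    ![1, k20, k21, k22],
    ![1, k30, k31, k32],
    ![1, k40, k41, k42],
    ![1, k50, k51, k52],
    ![1, k60, k61, k62]]

def line (α β : Fin 7) : Finset (Fin 7) := lineV (lineIdx α β)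

def Q : Subgroup (Equiv.Perm (Fin 7)) := MulAction.stabilizer (Equiv.Perm (Fin 7)) L

-- decidable facts
lemma F1 : aa • L = L ∧ bb • L = L := by constructor <;> decide
lemma F2 : ∀ α β : Fin 7, α ≠ β → α ∈ line α β ∧ β ∈ line α β ∧ line α β ∈ L := by decide
lemma F3 : ∀ i : Fin 7, ∀ α β : Fin 7, α ≠ β → α ∈ lineV i → β ∈ lineV i →
    line α β = lineV i := by decide
lemma F4 : ∀ i : Fin 7, ∀ j : Fin 4, ∀ x ∈ lineV i, KV i j x = x := by decide
lemma F5 : ∀ i : Fin 7, ∀ j : Fin 4, KV i j • L = L := by decide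
lemma F6 : ∀ i : Fin 7, ∀ x, x ∉ lineV i → ∀ y, y ∉ lineV i → ∃ j : Fin 4, KV i j x = y := by
  decide
lemma F7 : ∀ i : Fin 7, ∀ j : Fin 4, KV i j * KV i j = 1 := by decide
lemma F10 : ∀ α β : Fin 7, α ≠ β → (third α β ∈ line α β ∧ third α β ≠ α ∧ third α β ≠ β ∧
    ∀ x ∈ line α β, x = α ∨ x = β ∨ x = third α β) := by decide
lemma F11 : ∀ x y z w : Fin 7, x ≠ y → z ∉ line x y → (w = x ∨ w = y ∨ w = z ∨ w = third x y ∨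
    w = third x z ∨ w = third y z ∨ w = third x (third y z)) := by decide
lemma F12 : ∀ x y z : Fin 7, x ≠ y → z ∉ line x y → x ≠ z ∧ y ≠ z ∧ x ≠ third y z := by decide
lemma F13 : ∀ α β : Fin 7, α ≠ β → ∃ x, x ∉ line α β := by decide
lemma F16 : ∀ α β x : Fin 7, α ≠ β → x ∈ line α β → ∃ y, x ≠ y ∧ line x y = line α β := by decide
lemma F17 : ∀ α β : Fin 7, α ≠ β → (line α β).card = 3 := by decide
lemma F20 : ∀ i : Fin 7, Function.Injective (KV i) := by decide
lemma F21 : ∀ i i' : Fin 7, (∀ j : Fin 4, ∃ j' : Fin 4, KV i j = KV i' j') → i = i' := by decide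
lemma F22 : ∀ i : Fin 7, KV i 1 ≠ 1 := by decide
lemma F24 : ∀ α β : Fin 7, α ≠ β → lineIdx α β = lineIdx β α := by decide
lemma F25 : ∀ α β : Fin 7, α ≠ β →
    lineIdx α β = lineIdx 0 1 ∨ lineIdx α β = lineIdx 0 3 ∨ lineIdx α β = lineIdx 0 4 ∨
    lineIdx α β = lineIdx 1 3 ∨ lineIdx α β = lineIdx 1 4 ∨ lineIdx α β = lineIdx 2 3 ∨
    lineIdx α β = lineIdx 2 5 := by decide
lemma F26 : ∀ l ∈ L, ∃ i : Fin 7, lineV i = l := by decide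
lemma F27 : ∀ α β α' β' : Fin 7, α ≠ β → α' ≠ β' → line α β = line α' β' →
    lineIdx α β = lineIdx α' β' := by decide

lemma hKVP : ∀ i : Fin 7, ∀ j : Fin 4, KV i j ∈ P := by
  intro i j
  fin_cases i <;> fin_cases j <;>
    first
      | exact one_mem P
      | exact k00P | exact k01P | exact k02P | exact k10P | exact k11P | exact k12P
      | exact k20P | exact k21P | exact k22P | exact k30P | exact k31P | exact k32P
      | exact k40P | exact k41P | exact k42P | exact k50P | exact k51P | exact k52P
      | exact k60P | exact k61P | exact k62P

lemma hPQ : P ≤ Q := by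
  rw [P]
  refine (Subgroup.closure_le _).mpr ?_
  intro x hx
  rcases hx with rfl | hx
  · exact F1.1
  · rw [Set.mem_singleton_iff] at hx; subst hx; exact F1.2

lemma hsm {g : Equiv.Perm (Fin 7)} (hg : g ∈ Q) {l : Finset (Fin 7)} (hl : l ∈ L) :
    g • l ∈ L := by
  have : g • l ∈ g • L := Finset.smul_mem_smul_finset hl
  rwa [hg] at this

lemma hgline {g : Equiv.Perm (Fin 7)} (hg : g ∈ Q) {α β : Fin 7} (hαβ : α ≠ β)
    (hα : g α = α) (hβ : g β = β) : g • line α β = line α β := by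
  obtain ⟨h1, h2, h3⟩ := F2 α β hαβ
  obtain ⟨i, hi⟩ := F26 _ (hsm hg h3)
  have hα' : α ∈ g • line α β := by
    have := Finset.smul_mem_smul_finset (a := g) h1
    rwa [Equiv.Perm.smul_def, hα] at this
  have hβ' : β ∈ g • line α β := by
    have := Finset.smul_mem_smul_finset (a := g) h2
    rwa [Equiv.Perm.smul_def, hβ] at this
  rw [← hi] at *
  exact (F3 i α β hαβ hα' hβ').symm

lemma hmemline {g : Equiv.Perm (Fin 7)} (hg : g ∈ Q) {α β : Fin 7} (hαβ : α ≠ β)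
    (hα : g α = α) (hβ : g β = β) {x : Fin 7} (hx : x ∈ line α β) : g x ∈ line α β := by
  have := Finset.smul_mem_smul_finset (a := g) hx
  rwa [Equiv.Perm.smul_def, hgline hg hαβ hα hβ] at this

lemma hthird {g : Equiv.Perm (Fin 7)} (hg : g ∈ Q) {α β : Fin 7} (hαβ : α ≠ β)
    (hα : g α = α) (hβ : g β = β) : g (third α β) = third α β := by
  obtain ⟨ht1, ht2, ht3, ht4⟩ := F10 α β hαβ
  rcases ht4 _ (hmemline hg hαβ hα hβ ht1) with h | h | h
  · exact absurd (g.injective (h.trans hα.symm)) ht2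
  · exact absurd (g.injective (h.trans hβ.symm)) ht3
  · exact h

lemma hrig {g : Equiv.Perm (Fin 7)} (hg : g ∈ Q) {x y z : Fin 7} (hxy : x ≠ y)
    (hz : z ∉ line x y) (hx : g x = x) (hy : g y = y) (hzf : g z = z) : g = 1 := by
  obtain ⟨hxz, hyz, hxt⟩ := F12 x y z hxy hz
  have t1 := hthird hg hxy hx hy
  have t2 := hthird hg hxz hx hzf
  have t3 := hthird hg hyz hy hzf
  have t4 := hthird hg hxt hx t3
  apply Equiv.ext
  intro w
  rw [Equiv.Perm.one_apply]
  rcases F11 x y z w hxy hz with rfl | rfl | rfl | rfl | rfl | rfl | rfl <;> assumption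

lemma hstab {g : Equiv.Perm (Fin 7)} (hg : g ∈ Q) {α β : Fin 7} (hαβ : α ≠ β)
    (hα : g α = α) (hβ : g β = β) : ∃ j : Fin 4, g = KV (lineIdx α β) j := by
  obtain ⟨x0, hx0⟩ := F13 α β hαβ
  have hgx0 : g x0 ∉ line α β := by
    intro h
    rw [← hgline hg hαβ hα hβ] at h
    obtain ⟨u, hu, hu'⟩ := Finset.mem_smul_finset.mp h
    rw [Equiv.Perm.smul_def] at hu'
    exact hx0 (g.injective hu' ▸ hu)
  obtain ⟨j, hj⟩ := F6 (lineIdx α β) x0 hx0 (g x0) hgx0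
  set k := KV (lineIdx α β) j with hk
  have hkQ : k ∈ Q := F5 (lineIdx α β) j
  have hkα : k α = α := F4 _ j α (F2 α β hαβ).1
  have hkβ : k β = β := F4 _ j β (F2 α β hαβ).2.1
  have h1 : (k⁻¹ * g) α = α := by
    rw [Equiv.Perm.mul_apply, hα, ← hkα, Equiv.Perm.inv_def, Equiv.symm_apply_apply, hkα]
  have h2 : (k⁻¹ * g) β = β := by
    rw [Equiv.Perm.mul_apply, hβ, ← hkβ, Equiv.Perm.inv_def, Equiv.symm_apply_apply, hkβ]
  have h3 : (k⁻¹ * g) x0 = x0 := by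
    rw [Equiv.Perm.mul_apply, ← hj, Equiv.Perm.inv_def, Equiv.symm_apply_apply]
  have := hrig (mul_mem (inv_mem hkQ) hg) hαβ hx0 h1 h2 h3
  exact ⟨j, (inv_mul_eq_one.mp this).symm⟩

lemma hmem2 (α β : Fin 7) (p : ↥P) :
    p ∈ twoPointStab α β ↔ (p : Equiv.Perm (Fin 7)) α = α ∧ (p : Equiv.Perm (Fin 7)) β = β :=
  Iff.rfl

lemma hcar {α β : Fin 7} (hαβ : α ≠ β) :
    (((twoPointStab α β).map P.subtype : Subgroup (Equiv.Perm (Fin 7))) :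
      Set (Equiv.Perm (Fin 7))) = Set.range (KV (lineIdx α β)) := by
  ext g
  constructor
  · rintro ⟨p, hp, rfl⟩
    obtain ⟨h1, h2⟩ := (hmem2 α β p).mp hp
    obtain ⟨j, hj⟩ := hstab (hPQ p.2) hαβ h1 h2
    exact ⟨j, hj.symm⟩
  · rintro ⟨j, rfl⟩
    refine ⟨⟨KV (lineIdx α β) j, hKVP _ j⟩, (hmem2 α β _).mpr ?_, rfl⟩
    exact ⟨F4 _ j α (F2 α β hαβ).1, F4 _ j β (F2 α β hαβ).2.1⟩

lemma stab_eq_iff {α β α' β' : Fin 7} (h : α ≠ β) (h' : α' ≠ β') :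
    twoPointStab α β = twoPointStab α' β' ↔ lineIdx α β = lineIdx α' β' := by
  constructor
  · intro he
    apply F21
    intro j
    have hr : Set.range (KV (lineIdx α β)) = Set.range (KV (lineIdx α' β')) := by
      rw [← hcar h, ← hcar h', he]
    have : KV (lineIdx α β) j ∈ Set.range (KV (lineIdx α' β')) := hr ▸ ⟨j, rfl⟩
    obtain ⟨j', hj'⟩ := this
    exact ⟨j', hj'.symm⟩
  · intro he
    apply Subgroup.map_injective P.subtype_injective
    apply SetLike.ext'
    rw [hcar h, hcar h', he]

lemma klein {α β : Fin 7} (hαβ : α ≠ β) : IsKleinFour (twoPointStab α β) := by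
  set M := (twoPointStab α β).map P.subtype with hM
  have e := (twoPointStab α β).equivMapOfInjective P.subtype P.subtype_injective
  have hs : (M : Set (Equiv.Perm (Fin 7))) = Set.range (KV (lineIdx α β)) := hcar hαβ
  have hcard : Nat.card (twoPointStab α β) = 4 := by
    rw [Nat.card_congr e.toEquiv, ← SetLike.coe_sort_coe, hs,
      Nat.card_range_of_injective (F20 _), Nat.card_eq_fintype_card, Fintype.card_fin]
  have hsq : ∀ m : M, m ^ 2 = 1 := by
    intro m
    have hmem : (m : Equiv.Perm (Fin 7)) ∈ Set.range (KV (lineIdx α β)) := hs ▸ m.2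
    obtain ⟨j, hj⟩ := hmem
    apply Subtype.ext
    rw [SubgroupClass.coe_pow, pow_two, ← hj, F7 (lineIdx α β) j]
    rfl
  have hexp : Monoid.exponent (twoPointStab α β) = 2 := by
    rw [Monoid.exponent_eq_of_mulEquiv e]
    apply Nat.dvd_antisymm
    · exact Monoid.exponent_dvd_of_forall_pow_eq_one hsq
    · have hu : KV (lineIdx α β) 1 ∈ M := by
        rw [← SetLike.mem_coe, hs]; exact ⟨1, rfl⟩
      have h2 : (⟨_, hu⟩ : M) ^ 2 = 1 := hsq _
      have hne : (⟨_, hu⟩ : M) ≠ 1 := by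
        intro h
        exact F22 (lineIdx α β) (congrArg Subtype.val h)
      rw [← orderOf_eq_prime h2 hne]
      exact Monoid.order_dvd_exponent _
  exact ⟨hcard, hexp⟩

lemma ncard_seven {γ : Type*} {a b c d e f g : γ}
    (h1 : a ∉ ({b,c,d,e,f,g} : Set γ)) (h2 : b ∉ ({c,d,e,f,g} : Set γ))
    (h3 : c ∉ ({d,e,f,g} : Set γ)) (h4 : d ∉ ({e,f,g} : Set γ))
    (h5 : e ∉ ({f,g} : Set γ)) (h6 : f ∉ ({g} : Set γ)) :
    ({a,b,c,d,e,f,g} : Set γ).ncard = 7 := by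
  have fin1 : ({g} : Set γ).Finite := Set.finite_singleton g
  have fin2 : ({f,g} : Set γ).Finite := fin1.insert f
  have fin3 : ({e,f,g} : Set γ).Finite := fin2.insert e
  have fin4 : ({d,e,f,g} : Set γ).Finite := fin3.insert d
  have fin5 : ({c,d,e,f,g} : Set γ).Finite := fin4.insert c
  have fin6 : ({b,c,d,e,f,g} : Set γ).Finite := fin5.insert b
  rw [Set.ncard_insert_of_notMem h1 fin6, Set.ncard_insert_of_notMem h2 fin5,
    Set.ncard_insert_of_notMem h3 fin4, Set.ncard_insert_of_notMem h4 fin3,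
    Set.ncard_insert_of_notMem h5 fin2, Set.ncard_insert_of_notMem h6 fin1,
    Set.ncard_singleton]

lemma linecoe {α β : Fin 7} (hαβ : α ≠ β) :
    lineOf (twoPointStab α β) = ↑(line α β) := by
  ext x
  constructor
  · rintro ⟨α', β', hne', hS, hx⟩
    have hidx := (stab_eq_iff hne' hαβ).mp hS
    have hll : line α' β' = line α β := congrArg lineV hidx
    rcases hx with rfl | rfl
    · exact Finset.mem_coe.mpr (hll ▸ (F2 x β' hne').1)
    · exact Finset.mem_coe.mpr (hll ▸ (F2 α' x hne').2.1)
  · intro hx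
    obtain ⟨y, hxy, hply⟩ := F16 α β x hαβ (Finset.mem_coe.mp hx)
    exact ⟨x, y, hxy, (stab_eq_iff hxy hαβ).mpr (F27 _ _ _ _ hxy hαβ hply), Or.inl rfl⟩

theorem two_point_stabilizers_of_P_give_fano_plane :
    -- (a) each two-point stabilizer is a Klein four-group
    (∀ α β : Fin 7, α ≠ β → IsKleinFour (twoPointStab α β)) ∧
    -- (b) exactly 7 distinct subgroups of P arise as two-point stabilizers
    ({S : Subgroup P | ∃ α β : Fin 7, α ≠ β ∧ twoPointStab α β = S}.ncard = 7) ∧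
    -- (c) each line has exactly 3 points
    (∀ α β : Fin 7, α ≠ β → (lineOf (twoPointStab α β)).ncard = 3) ∧
    -- (d) every pair of distinct points lies on exactly one line: the Fano plane
    (∀ x y : Fin 7, x ≠ y → ∃! l : Set (Fin 7),
      (∃ α β : Fin 7, α ≠ β ∧ l = lineOf (twoPointStab α β)) ∧ x ∈ l ∧ y ∈ l) := by
  refine ⟨fun α β h => klein h, ?_, ?_, ?_⟩
  · -- (b)
    have hset : {S : Subgroup P | ∃ α β : Fin 7, α ≠ β ∧ twoPointStab α β = S} =
        ({twoPointStab 0 1, twoPointStab 0 3, twoPointStab 0 4, twoPointStab 1 3,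
          twoPointStab 1 4, twoPointStab 2 3, twoPointStab 2 5} : Set (Subgroup P)) := by
      ext S
      constructor
      · rintro ⟨α, β, hne, rfl⟩
        rcases F25 α β hne with h | h | h | h | h | h | h
        · exact Or.inl ((stab_eq_iff hne (by decide)).mpr h)
        · exact Or.inr (Or.inl ((stab_eq_iff hne (by decide)).mpr h))
        · exact Or.inr (Or.inr (Or.inl ((stab_eq_iff hne (by decide)).mpr h)))
        · exact Or.inr (Or.inr (Or.inr (Or.inl ((stab_eq_iff hne (by decide)).mpr h))))
        · exact Or.inr (Or.inr (Or.inr (Or.inr (Or.inl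
            ((stab_eq_iff hne (by decide)).mpr h)))))
        · exact Or.inr (Or.inr (Or.inr (Or.inr (Or.inr (Or.inl
            ((stab_eq_iff hne (by decide)).mpr h))))))
        · exact Or.inr (Or.inr (Or.inr (Or.inr (Or.inr (Or.inr
            ((stab_eq_iff hne (by decide)).mpr h))))))
      · intro hS
        rcases hS with rfl | rfl | rfl | rfl | rfl | rfl | rfl
        · exact ⟨0, 1, by decide, rfl⟩
        · exact ⟨0, 3, by decide, rfl⟩
        · exact ⟨0, 4, by decide, rfl⟩
        · exact ⟨1, 3, by decide, rfl⟩
        · exact ⟨1, 4, by decide, rfl⟩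
        · exact ⟨2, 3, by decide, rfl⟩
        · exact ⟨2, 5, by decide, rfl⟩
    rw [hset]
    have hd : ∀ α β α' β' : Fin 7, α ≠ β ∧ α' ≠ β' ∧ lineIdx α β ≠ lineIdx α' β' →
        twoPointStab α β ≠ twoPointStab α' β' :=
      fun α β α' β' ⟨h, h', hni⟩ he => hni ((stab_eq_iff h h').mp he)
    apply ncard_seven <;>
      simp only [Set.mem_insert_iff, Set.mem_singleton_iff, not_or]
    · exact ⟨hd 0 1 0 3 (by decide), hd 0 1 0 4 (by decide), hd 0 1 1 3 (by decide),
        hd 0 1 1 4 (by decide), hd 0 1 2 3 (by decide), hd 0 1 2 5 (by decide)⟩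
    · exact ⟨hd 0 3 0 4 (by decide), hd 0 3 1 3 (by decide), hd 0 3 1 4 (by decide),
        hd 0 3 2 3 (by decide), hd 0 3 2 5 (by decide)⟩
    · exact ⟨hd 0 4 1 3 (by decide), hd 0 4 1 4 (by decide), hd 0 4 2 3 (by decide),
        hd 0 4 2 5 (by decide)⟩
    · exact ⟨hd 1 3 1 4 (by decide), hd 1 3 2 3 (by decide), hd 1 3 2 5 (by decide)⟩
    · exact ⟨hd 1 4 2 3 (by decide), hd 1 4 2 5 (by decide)⟩
    · exact hd 2 3 2 5 (by decide)
  · -- (c)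
    intro α β h
    rw [linecoe h, Set.ncard_coe_finset, F17 α β h]
  · -- (d)
    intro x y hxy
    refine ⟨lineOf (twoPointStab x y), ⟨⟨x, y, hxy, rfl⟩, ?_, ?_⟩, ?_⟩
    · rw [linecoe hxy]; exact Finset.mem_coe.mpr (F2 x y hxy).1
    · rw [linecoe hxy]; exact Finset.mem_coe.mpr (F2 x y hxy).2.1
    · rintro l ⟨⟨α, β, hne, rfl⟩, hxl, hyl⟩
      rw [linecoe hne] at hxl hyl
      have h3 := (F2 α β hne).2.2
      obtain ⟨i, hi⟩ := F26 _ h3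
      have hlxy : line x y = line α β := by
        rw [← hi] at hxl hyl ⊢
        exact F3 i x y hxy (Finset.mem_coe.mp hxl) (Finset.mem_coe.mp hyl)
      have := (stab_eq_iff hne hxy).mpr (F27 _ _ _ _ hne hxy hlxy.symm)
      rw [this]

end Stmt17
end

section
/- Let d ≥ 1 and let ψ₁, …, ψ_{d²} be unit vectors in ℂᵈ satisfying the SIC condition |⟨ψ_i, ψ_j⟩|² = 1/(d+1) for all i ≠ j. Set Π_i = |ψ_i⟩⟨ψ_i| ∈ M_d(ℂ) and, for a matrix ρ ∈ M_d(ℂ), set p(i) = tr(ρ Π_i)/d (the Born probability for the POVM element E_i = Π_i/d). Then every ρ ∈ M_d(ℂ) with tr ρ = 1 is recovered by the formula ρ = Σ_{i=1}^{d²} [ (d+1) p(i) − 1/d ] Π_i. -/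
namespace Stmt19


/-- The rank-one projector `|ψ⟩⟨ψ|` associated with a vector `ψ ∈ ℂᵈ`, as a `d × d` matrix:
`(|ψ⟩⟨ψ|)_{k l} = ψ k ⬝ conj (ψ l)`. -/
def outerProj {d : ℕ} (ψ : EuclideanSpace ℂ (Fin d)) : Matrix (Fin d) (Fin d) ℂ :=
  Matrix.of fun k l => ψ k * starRingEnd ℂ (ψ l)

lemma trace_outer_mul_outer {d : ℕ} (φ χ : EuclideanSpace ℂ (Fin d)) :
    (outerProj φ * outerProj χ).trace = (inner ℂ φ χ : ℂ) * (inner ℂ χ φ : ℂ) := by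
  simp only [Matrix.trace, Matrix.diag, Matrix.mul_apply, outerProj, Matrix.of_apply,
    PiLp.inner_apply, RCLike.inner_apply]
  rw [Finset.sum_comm, Finset.sum_mul_sum]
  congr 1; ext m; congr 1; ext k; ring

lemma trace_outer {d : ℕ} (φ : EuclideanSpace ℂ (Fin d)) :
    (outerProj φ).trace = ((‖φ‖ : ℂ))^2 := by
  have : (outerProj φ).trace = (inner ℂ φ φ : ℂ) := by
    simp only [Matrix.trace, Matrix.diag, outerProj, Matrix.of_apply, PiLp.inner_apply,
      RCLike.inner_apply]
  rw [this, inner_self_eq_norm_sq_to_K]; norm_cast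

/-- SIC reconstruction formula: if `ψ₁, …, ψ_{d²}` are unit vectors in `ℂᵈ` with
`|⟨ψ_i, ψ_j⟩|² = 1/(d+1)` for `i ≠ j`, `Π_i = |ψ_i⟩⟨ψ_i|` and `p i = tr(ρ Π_i)/d`, then every
matrix `ρ` of trace one satisfies `ρ = Σ_i [(d+1) p(i) − 1/d] Π_i`. -/
theorem sic_reconstruction (d : ℕ) (hd : 1 ≤ d)
    (ψ : Fin (d ^ 2) → EuclideanSpace ℂ (Fin d))
    (hunit : ∀ i, ‖ψ i‖ = 1)
    (hsic : ∀ i j, i ≠ j → ‖(inner ℂ (ψ i) (ψ j) : ℂ)‖ ^ 2 = 1 / (d + 1))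
    (ρ : Matrix (Fin d) (Fin d) ℂ) (hρ : ρ.trace = 1) :
    ρ = ∑ i : Fin (d ^ 2),
      (((d : ℂ) + 1) * ((ρ * outerProj (ψ i)).trace / d) - 1 / d) • outerProj (ψ i) := by
  set D : ℂ := (d : ℂ) with hD
  have hD0 : D ≠ 0 := by
    simp [hD, Nat.cast_ne_zero]; omega
  have hD1 : D + 1 ≠ 0 := by
    have : ((d + 1 : ℕ) : ℂ) ≠ 0 := by exact_mod_cast Nat.succ_ne_zero d
    simpa [hD] using this
  set P : Fin (d ^ 2) → Matrix (Fin d) (Fin d) ℂ := fun i => outerProj (ψ i) with hP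
  -- Gram matrix values
  have hG : ∀ i j, (P i * P j).trace = if i = j then (1 : ℂ) else 1 / (D + 1) := by
    intro i j
    rw [hP, trace_outer_mul_outer]
    by_cases h : i = j
    · subst h
      have h1 : (inner ℂ (ψ i) (ψ i) : ℂ) = 1 := by
        rw [inner_self_eq_norm_sq_to_K, hunit i]; norm_num
      simp [h1, hunit]
    · have hz : (inner ℂ (ψ j) (ψ i) : ℂ) = starRingEnd ℂ (inner ℂ (ψ i) (ψ j) : ℂ) := by
        rw [inner_conj_symm]
      rw [hz, Complex.mul_conj]
      have := hsic i j h
      rw [if_neg h]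
      rw [Complex.normSq_eq_norm_sq, this]
      push_cast
      norm_num
      exact hD.symm
  -- trace of each projector is 1
  have htr : ∀ i, (P i).trace = 1 := by
    intro i; rw [hP, trace_outer, hunit i]; norm_num
  -- linear independence
  have hli : LinearIndependent ℂ P := by
    rw [Fintype.linearIndependent_iff]
    intro g hg
    have h1 : ∀ j, ∑ i, g i * (P i * P j).trace = 0 := by
      intro j
      have := congrArg (fun M => (M * P j).trace) hg
      simpa [Finset.sum_mul, Matrix.smul_mul, smul_eq_mul] using this
    have key : ∀ j, (∑ i, g i) + D * g j = 0 := by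
      intro j
      have h2 := h1 j
      simp only [hG] at h2
      have expand : ∑ i, g i * (if i = j then (1:ℂ) else 1 / (D + 1)) =
          ((∑ i, g i) + D * g j) * (1 / (D + 1)) := by
        have step : ∀ i, g i * (if i = j then (1:ℂ) else 1 / (D + 1)) =
            g i * (1 / (D + 1)) + (if i = j then g i * (D / (D + 1)) else 0) := by
          intro i; split_ifs with h
          · field_simp; ring
          · ring
        rw [Finset.sum_congr rfl fun i _ => step i, Finset.sum_add_distrib,
          ← Finset.sum_mul, Finset.sum_ite_eq' Finset.univ j]
        simp only [Finset.mem_univ, if_true]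
        field_simp
      rw [expand] at h2
      rcases mul_eq_zero.mp h2 with h3 | h3
      · exact h3
      · exact absurd h3 (by simp [hD1])
    have hS : (∑ i, g i) = 0 := by
      have hsum := key
      have h4 : (↑(d ^ 2) : ℂ) * (∑ i, g i) + D * (∑ j, g j) = 0 := by
        have := Finset.sum_congr rfl (fun j (_ : j ∈ Finset.univ) => hsum j)
        simpa [Finset.sum_add_distrib, Finset.mul_sum, Finset.sum_const,
          Finset.card_univ, nsmul_eq_mul] using this.trans (by simp)
      have h5 : ((↑(d ^ 2) : ℂ) + D) * (∑ i, g i) = 0 := by ring_nf; ring_nf at h4; linear_combination h4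
      have h6 : ((↑(d ^ 2) : ℂ) + D) ≠ 0 := by
        push_cast
        rw [hD]
        intro hc
        have : (d : ℂ) * (d + 1) = 0 := by ring_nf; linear_combination hc
        rcases mul_eq_zero.mp this with h | h
        · exact hD0 h
        · exact hD1 (by rw [hD]; linear_combination h)
      exact (mul_eq_zero.mp h5).resolve_left h6
    intro i
    have := key i
    rw [hS, zero_add] at this
    exact (mul_eq_zero.mp this).resolve_left hD0
  -- basis
  have hcard : Fintype.card (Fin (d ^ 2)) = Module.finrank ℂ (Matrix (Fin d) (Fin d) ℂ) := by
    rw [Module.finrank_matrix]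
    simp [pow_two]
  haveI : Nonempty (Fin (d ^ 2)) := ⟨⟨0, by positivity⟩⟩
  set B := basisOfLinearIndependentOfCardEqFinrank hli hcard with hB
  have hBcoe : ⇑B = P := coe_basisOfLinearIndependentOfCardEqFinrank hli hcard
  set c : Fin (d ^ 2) → ℂ := fun i => B.repr ρ i with hc
  have hrep : ∑ i, c i • P i = ρ := by
    have := B.sum_repr ρ
    rwa [hBcoe] at this
  have hsumc : ∑ i, c i = 1 := by
    have := congrArg Matrix.trace hrep
    simpa [Matrix.trace_smul, htr, smul_eq_mul, hρ] using this
  have ht : ∀ j, (ρ * P j).trace = (D * c j + 1) / (D + 1) := by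
    intro j
    rw [← hrep, Finset.sum_mul]
    have : ∀ i, (c i • P i) * P j = c i • (P i * P j) := fun i => Matrix.smul_mul _ _ _
    rw [Finset.sum_congr rfl fun i _ => this i]
    rw [Matrix.trace_sum]
    simp only [Matrix.trace_smul, hG, smul_eq_mul]
    have step : ∀ i, c i * (if i = j then (1:ℂ) else 1 / (D + 1)) =
        c i * (1 / (D + 1)) + (if i = j then c i * (D / (D + 1)) else 0) := by
      intro i; split_ifs with h
      · field_simp; ring
      · ring
    rw [Finset.sum_congr rfl fun i _ => step i, Finset.sum_add_distrib,
      ← Finset.sum_mul, Finset.sum_ite_eq' Finset.univ j, hsumc]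
    simp only [Finset.mem_univ, if_true]
    field_simp
    ring
  have hcoef : ∀ j, (D + 1) * ((ρ * P j).trace / D) - 1 / D = c j := by
    intro j
    rw [ht j]
    field_simp
    ring
  conv_lhs => rw [← hrep]
  exact Finset.sum_congr rfl fun j _ => by rw [← hcoef j]
end Stmt19
end
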